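/- arXiv:2410.08575 — 9 statements merged into one kernel-verified Lean document; each statement's English description precedes it below -/
import Mathlib

section
/- For every y ∈ [0, ψ_max), ρ⁻¹(y·μ⁻¹(y)) = k_c·y/(ψ_max − y), where ψ_max = μ_max·ρ_max/(ρ_max + q_min·μ_max) and k_c = k_v·q_min·μ_max/(ρ_max + q_min·μ_max); in other words, the function ψ defined by ψ⁻¹(y) = ρ⁻¹(y·μ⁻¹(y)) is the Monod function ψ(v) = ψ_max·v/(k_c + v). Moreover ψ_max < μ_max. -/
/-- The vitamin uptake rate `ρ(v) = ρmax·v/(kv+v)`. -/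
noncomputable def rho (rhomax kv v : ℝ) : ℝ := rhomax * v / (kv + v)

/-- The algal growth rate `μ(q) = μmax·(1 − qmin/q)`. -/
noncomputable def mufun (mumax qmin q : ℝ) : ℝ := mumax * (1 - qmin / q)

/-- `ψmax = μmax·ρmax/(ρmax + qmin·μmax)`. -/
noncomputable def psiMax (rhomax mumax qmin : ℝ) : ℝ :=
  mumax * rhomax / (rhomax + qmin * mumax)

/-- `k_c = kv·qmin·μmax/(ρmax + qmin·μmax)`. -/
noncomputable def kC (rhomax kv mumax qmin : ℝ) : ℝ :=
  kv * qmin * mumax / (rhomax + qmin * mumax)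

/-! Both inverses are explicit: `μ⁻¹(y) = μmax·qmin/(μmax − y)` and `ρ⁻¹(x) = kv·x/(ρmax − x)`.
Substituting `x = y·μ⁻¹(y)` gives `ρmax − x = (ρmax + qmin·μmax)(ψmax − y)/(μmax − y)`, which is
positive exactly for `y < ψmax`; dividing `kv·x` by it yields `k_c·y/(ψmax − y)`. -/

theorem eq_of_mufun_eq {mumax qmin q y : ℝ} (hq : q ≠ 0) (hy : mumax - y ≠ 0)
    (h : mufun mumax qmin q = y) : q = mumax * qmin / (mumax - y) := by
  rw [eq_div_iff hy]
  rw [mufun] at h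
  field_simp at h
  linear_combination h

theorem eq_of_rho_eq {rhomax kv v x : ℝ} (hv : kv + v ≠ 0) (hx : rhomax - x ≠ 0)
    (h : rho rhomax kv v = x) : v = kv * x / (rhomax - x) := by
  rw [eq_div_iff hx]
  rw [rho, div_eq_iff hv] at h
  linear_combination h

theorem psiMax_lt_mumax {rhomax mumax qmin : ℝ} (hrho : 0 < rhomax) (hmu : 0 < mumax)
    (hqmin : 0 < qmin) : psiMax rhomax mumax qmin < mumax := by
  rw [psiMax, div_lt_iff₀ (by positivity)]
  nlinarith [mul_pos hqmin (mul_pos hmu hmu)]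

theorem rhomax_sub_eq_mul_psiMax_sub {rhomax mumax qmin y : ℝ} (hD : rhomax + qmin * mumax ≠ 0)
    (hy : mumax - y ≠ 0) :
    rhomax - y * (mumax * qmin / (mumax - y)) =
      (rhomax + qmin * mumax) * (psiMax rhomax mumax qmin - y) / (mumax - y) := by
  rw [psiMax, mul_sub, mul_div_cancel₀ _ hD]
  field_simp
  ring

/-- For every `y ∈ [0, ψmax)`, `ρ⁻¹(y·μ⁻¹(y)) = k_c·y/(ψmax − y)`: the function `ψ` defined by
`ψ⁻¹(y) = ρ⁻¹(y·μ⁻¹(y))` is the Monod function `ψ(v) = ψmax·v/(k_c + v)`.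
Moreover `ψmax < μmax`. Here `ρ⁻¹` is the inverse of `ρ` on `[0, ρmax)` (characterized by
taking values in `[0,∞)` and `ρ ∘ ρ⁻¹ = id`), and `μ⁻¹` is the inverse of `μ` on `[0, μmax)`
(characterized by taking values in `[qmin,∞)` and `μ ∘ μ⁻¹ = id`). -/
theorem psi_is_monod (rhomax kv mumax qmin : ℝ)
    (hrho : 0 < rhomax) (hkv : 0 < kv) (hmu : 0 < mumax) (hqmin : 0 < qmin)
    (rhoInv muInv : ℝ → ℝ)
    (hrhoInv : ∀ x ∈ Set.Ico (0:ℝ) rhomax, 0 ≤ rhoInv x ∧ rho rhomax kv (rhoInv x) = x)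
    (hmuInv : ∀ y ∈ Set.Ico (0:ℝ) mumax, qmin ≤ muInv y ∧ mufun mumax qmin (muInv y) = y) :
    (∀ y ∈ Set.Ico (0:ℝ) (psiMax rhomax mumax qmin),
        rhoInv (y * muInv y) =
          kC rhomax kv mumax qmin * y / (psiMax rhomax mumax qmin - y)) ∧
    psiMax rhomax mumax qmin < mumax := by
  have hpsi := psiMax_lt_mumax hrho hmu hqmin
  refine ⟨fun y ⟨hy0, hyψ⟩ => ?_, hpsi⟩
  have hD : 0 < rhomax + qmin * mumax := by positivity
  have hμy : 0 < mumax - y := by linarith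
  have hψy : 0 < psiMax rhomax mumax qmin - y := by linarith
  obtain ⟨hq, hμq⟩ := hmuInv y ⟨hy0, by linarith⟩
  have hq_eq := eq_of_mufun_eq (by linarith) hμy.ne' hμq
  have hgap := rhomax_sub_eq_mul_psiMax_sub hD.ne' hμy.ne'
  rw [← hq_eq] at hgap
  have hgap_pos : 0 < rhomax - y * muInv y := by rw [hgap]; positivity
  obtain ⟨hv, hρv⟩ := hrhoInv (y * muInv y) ⟨by nlinarith, by linarith⟩
  rw [eq_of_rho_eq (by linarith) hgap_pos.ne' hρv, hgap, hq_eq, kC]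
  field_simp
end

section
/- For a fixed vitamin feed v_in > 0 and dilution rate d > 0, the algal (Droop) subsystem v̇ = −ρ(v)c + d(v_in − v), q̇ = ρ(v) − μ(q)q, ċ = (μ(q) − d)c admits an equilibrium (v*, q*, c*) with c* > 0 if and only if d < ψ(v_in); in that case this equilibrium is unique and given by v* = ψ⁻¹(d), q* = μ⁻¹(d), c* = (v_in − v*)/q*. -/
set_option maxHeartbeats 800000



/-- The Monod function `ψ(v) = ψmax·v/(k_c + v)`. -/
noncomputable def psi (rhomax kv mumax qmin v : ℝ) : ℝ :=
  psiMax rhomax mumax qmin * v / (kC rhomax kv mumax qmin + v)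

/-- The inverse of `ψ` on `[0, ψmax)`: `ψ⁻¹(y) = k_c·y/(ψmax − y)`. -/
noncomputable def psiInv (rhomax kv mumax qmin y : ℝ) : ℝ :=
  kC rhomax kv mumax qmin * y / (psiMax rhomax mumax qmin - y)

/-- The inverse of `μ` on `[0, μmax)`: `μ⁻¹(y) = qmin·μmax/(μmax − y)`. -/
noncomputable def muInv (mumax qmin y : ℝ) : ℝ := qmin * mumax / (mumax - y)

lemma droop_aux (rhomax kv mumax qmin vIn d : ℝ)
    (hrho : 0 < rhomax) (hkv : 0 < kv) (hmu : 0 < mumax) (hqmin : 0 < qmin)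
    (hvIn : 0 < vIn) (hd : 0 < d)
    (v q c : ℝ) (hv : 0 ≤ v) (hq : qmin ≤ q) (hc : 0 < c)
    (e1 : -(rho rhomax kv v) * c + d * (vIn - v) = 0)
    (e2 : rho rhomax kv v - mufun mumax qmin q * q = 0)
    (e3 : (mufun mumax qmin q - d) * c = 0) :
    v = psiInv rhomax kv mumax qmin d ∧
    q = muInv mumax qmin d ∧
    c = (vIn - v) / q ∧
    d < psi rhomax kv mumax qmin vIn := by
  have hS : 0 < rhomax + qmin * mumax := by positivity
  set K := kC rhomax kv mumax qmin with hKdef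
  set P := psiMax rhomax mumax qmin with hPdef
  have hKS : K * (rhomax + qmin * mumax) = kv * qmin * mumax := by
    rw [hKdef]; unfold kC; field_simp
  have hPS : P * (rhomax + qmin * mumax) = mumax * rhomax := by
    rw [hPdef]; unfold psiMax; field_simp
  have hKpos : 0 < K := by rw [hKdef]; unfold kC; positivity
  have hPpos : 0 < P := by rw [hPdef]; unfold psiMax; positivity
  have hqpos : 0 < q := lt_of_lt_of_le hqmin hq
  have hkvv : 0 < kv + v := by linarith
  -- from e3: mufun q = d
  have hmq : mufun mumax qmin q = d := by
    rcases mul_eq_zero.mp e3 with h | h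
    · linarith
    · exact absurd h (ne_of_gt hc)
  have hmq' : mumax * (q - qmin) = d * q := by
    have h := hmq
    unfold mufun at h
    field_simp at h
    linarith [h]
  have hdm : d < mumax := by nlinarith
  have hmd : 0 < mumax - d := by linarith
  have hqeq : q = muInv mumax qmin d := by
    unfold muInv
    rw [eq_div_iff (ne_of_gt hmd)]
    nlinarith
  -- from e2
  have hrv : rho rhomax kv v = d * q := by
    rw [hmq] at e2; linarith
  have e2' : rhomax * v * (mumax - d) = d * qmin * mumax * (kv + v) := by
    have h := hrv
    unfold rho at h
    rw [div_eq_iff (ne_of_gt hkvv)] at h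
    rw [hqeq] at h
    unfold muInv at h
    field_simp at h
    nlinarith [h]
  have hvpos : 0 < v := by
    rcases lt_or_eq_of_le hv with h | h
    · exact h
    · exfalso
      rw [← h] at e2'
      have : 0 < d * qmin * mumax * (kv + 0) := by positivity
      nlinarith
  have hkey : 0 < rhomax * (mumax - d) - d * qmin * mumax := by
    have h1 : v * (rhomax * (mumax - d) - d * qmin * mumax) = d * qmin * mumax * kv := by
      linear_combination e2'
    by_contra h
    push_neg at h
    have h2 : v * (rhomax * (mumax - d) - d * qmin * mumax) ≤ 0 :=
      mul_nonpos_of_nonneg_of_nonpos hvpos.le h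
    rw [h1] at h2
    have : 0 < d * qmin * mumax * kv := by positivity
    linarith
  have hpm : d < P := by
    have h : d < mumax * rhomax / (rhomax + qmin * mumax) := by
      rw [lt_div_iff₀ hS]; nlinarith [hkey]
    rw [hPdef]; unfold psiMax; exact h
  have hpmd : 0 < P - d := by linarith
  have hKd : K * d = v * (P - d) := by
    apply mul_right_cancel₀ (ne_of_gt hS)
    linear_combination d * hKS - v * hPS - e2'
  have hveq : v = psiInv rhomax kv mumax qmin d := by
    unfold psiInv
    rw [← hKdef, ← hPdef, eq_div_iff (ne_of_gt hpmd)]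
    linear_combination -hKd
  have hceq : c = (vIn - v) / q := by
    rw [hrv] at e1
    rw [eq_div_iff (ne_of_gt hqpos)]
    have h1 : d * (q * c) = d * (vIn - v) := by nlinarith [e1]
    have := mul_left_cancel₀ (ne_of_gt hd) h1
    linarith
  have hvlt : v < vIn := by
    have h2 : 0 < (vIn - v) / q := by rw [← hceq]; exact hc
    have h3 := mul_pos h2 hqpos
    rw [div_mul_cancel₀ _ (ne_of_gt hqpos)] at h3
    linarith
  have hdlt : d < psi rhomax kv mumax qmin vIn := by
    unfold psi
    rw [← hKdef, ← hPdef, lt_div_iff₀ (by linarith : (0:ℝ) < K + vIn)]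
    have hlt : v * (P - d) < vIn * (P - d) := mul_lt_mul_of_pos_right hvlt hpmd
    nlinarith [hKd, hlt]
  exact ⟨hveq, hqeq, hceq, hdlt⟩

lemma droop_bwd (rhomax kv mumax qmin vIn d : ℝ)
    (hrho : 0 < rhomax) (hkv : 0 < kv) (hmu : 0 < mumax) (hqmin : 0 < qmin)
    (hvIn : 0 < vIn) (hd : 0 < d)
    (hlt : d < psi rhomax kv mumax qmin vIn) :
    ∃ v q c : ℝ, 0 ≤ v ∧ qmin ≤ q ∧ 0 < c ∧
        -(rho rhomax kv v) * c + d * (vIn - v) = 0 ∧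
        rho rhomax kv v - mufun mumax qmin q * q = 0 ∧
        (mufun mumax qmin q - d) * c = 0 := by
  have hS : 0 < rhomax + qmin * mumax := by positivity
  set K := kC rhomax kv mumax qmin with hKdef
  set P := psiMax rhomax mumax qmin with hPdef
  have hKS : K * (rhomax + qmin * mumax) = kv * qmin * mumax := by
    rw [hKdef]; unfold kC; field_simp
  have hPS : P * (rhomax + qmin * mumax) = mumax * rhomax := by
    rw [hPdef]; unfold psiMax; field_simp
  have hKpos : 0 < K := by rw [hKdef]; unfold kC; positivity
  have hPpos : 0 < P := by rw [hPdef]; unfold psiMax; positivity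
  have hKvIn : 0 < K + vIn := by linarith
  have hpsilt : psi rhomax kv mumax qmin vIn < P := by
    unfold psi
    rw [← hKdef, ← hPdef, div_lt_iff₀ hKvIn]
    nlinarith [mul_pos hPpos hKpos]
  have hpm : d < P := lt_trans hlt hpsilt
  have hpmd : 0 < P - d := by linarith
  have hPm : P < mumax := by
    have h : P * rhomax < P * (rhomax + qmin * mumax) := by
      nlinarith [mul_pos hPpos (mul_pos hqmin hmu)]
    rw [hPS] at h
    exact lt_of_mul_lt_mul_right (by nlinarith) hrho.le
  have hdm : d < mumax := lt_trans hpm hPm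
  have hmd : 0 < mumax - d := by linarith
  -- the equilibrium
  refine ⟨K * d / (P - d), qmin * mumax / (mumax - d), (vIn - K * d / (P - d)) / (qmin * mumax / (mumax - d)), ?_, ?_, ?_, ?_, ?_, ?_⟩
  all_goals {
    set v := K * d / (P - d) with hvdef
    set q := qmin * mumax / (mumax - d) with hqdef
    have hvpos : 0 < v := by rw [hvdef]; positivity
    have hqpos : 0 < q := by rw [hqdef]; positivity
    have hqge : qmin ≤ q := by
      rw [hqdef, le_div_iff₀ hmd]; nlinarith
    have hvlt : v < vIn := by
      rw [hvdef, div_lt_iff₀ hpmd]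
      have h := hlt
      unfold psi at h
      rw [← hKdef, ← hPdef, lt_div_iff₀ hKvIn] at h
      nlinarith
    have hcpos : 0 < (vIn - v) / q := by
      apply div_pos (by linarith) hqpos
    have hmq : mufun mumax qmin q = d := by
      unfold mufun
      rw [hqdef]
      field_simp
      ring
    have hkvv : 0 < kv + v := by linarith
    have hrv : rho rhomax kv v = d * q := by
      unfold rho
      rw [div_eq_iff (ne_of_gt hkvv), hvdef, hqdef]
      field_simp
      linear_combination (P - d) * hKS - K * hPS
    first
    | exact hvpos.le
    | exact hqge
    | exact hcpos
    | (rw [hrv, hmq]; field_simp; ring)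
    | (rw [hrv]; field_simp [ne_of_gt hqpos]; ring)
    | (rw [hmq]; ring)
  }

/-- For a fixed vitamin feed `v_in > 0` and dilution rate `d > 0`, the algal (Droop) subsystem
`v̇ = −ρ(v)c + d(v_in − v)`, `q̇ = ρ(v) − μ(q)q`, `ċ = (μ(q) − d)c` admits an equilibrium
`(v*, q*, c*)` with `c* > 0` iff `d < ψ(v_in)`; in that case this equilibrium is unique and
given by `v* = ψ⁻¹(d)`, `q* = μ⁻¹(d)`, `c* = (v_in − v*)/q*`. -/
theorem droop_equilibrium (rhomax kv mumax qmin vIn d : ℝ)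
    (hrho : 0 < rhomax) (hkv : 0 < kv) (hmu : 0 < mumax) (hqmin : 0 < qmin)
    (hvIn : 0 < vIn) (hd : 0 < d) :
    ((∃ v q c : ℝ, 0 ≤ v ∧ qmin ≤ q ∧ 0 < c ∧
        -(rho rhomax kv v) * c + d * (vIn - v) = 0 ∧
        rho rhomax kv v - mufun mumax qmin q * q = 0 ∧
        (mufun mumax qmin q - d) * c = 0)
      ↔ d < psi rhomax kv mumax qmin vIn) ∧
    (∀ v q c : ℝ, 0 ≤ v → qmin ≤ q → 0 < c →
        -(rho rhomax kv v) * c + d * (vIn - v) = 0 →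
        rho rhomax kv v - mufun mumax qmin q * q = 0 →
        (mufun mumax qmin q - d) * c = 0 →
        v = psiInv rhomax kv mumax qmin d ∧
        q = muInv mumax qmin d ∧
        c = (vIn - v) / q) := by
  refine ⟨⟨?_, droop_bwd rhomax kv mumax qmin vIn d hrho hkv hmu hqmin hvIn hd⟩, ?_⟩
  · rintro ⟨v, q, c, hv, hq, hc, e1, e2, e3⟩
    exact (droop_aux rhomax kv mumax qmin vIn d hrho hkv hmu hqmin hvIn hd
      v q c hv hq hc e1 e2 e3).2.2.2
  · intro v q c hv hq hc e1 e2 e3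
    obtain ⟨h1, h2, h3, _⟩ := droop_aux rhomax kv mumax qmin vIn d hrho hkv hmu hqmin hvIn hd
      v q c hv hq hc e1 e2 e3
    exact ⟨h1, h2, h3⟩
end

section
/- If 0 < d < ψ(v_in) for some v_in > 0, then d < ψ_max < μ_max, the equilibrium quota q* = μ⁻¹(d) satisfies q* < q_max where q_max = q_min + ρ_max/μ_max, and consequently μ(q*)·q* < ρ_max (so v* = ρ⁻¹(μ(q*)q*) is well defined). -/
/-- If `0 < d < ψ(v_in)` for some `v_in > 0`, then `d < ψmax < μmax`, the equilibrium quota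
`q* = μ⁻¹(d)` satisfies `q* < q_max` where `q_max = qmin + ρmax/μmax`, and consequently
`μ(q*)·q* < ρmax` (so `v* = ρ⁻¹(μ(q*)q*)` is well defined). -/
theorem quota_bounds (rhomax kv mumax qmin vIn d : ℝ)
    (hrho : 0 < rhomax) (hkv : 0 < kv) (hmu : 0 < mumax) (hqmin : 0 < qmin)
    (hvIn : 0 < vIn) (hd0 : 0 < d) (hd : d < psi rhomax kv mumax qmin vIn) :
    d < psiMax rhomax mumax qmin ∧
    psiMax rhomax mumax qmin < mumax ∧
    muInv mumax qmin d < qmin + rhomax / mumax ∧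
    mufun mumax qmin (muInv mumax qmin d) * muInv mumax qmin d < rhomax := by
  have hS : 0 < rhomax + qmin * mumax := by positivity
  have hkC : 0 < kC rhomax kv mumax qmin := by unfold kC; positivity
  have hpsimax : 0 < psiMax rhomax mumax qmin := by unfold psiMax; positivity
  have h1 : d < psiMax rhomax mumax qmin := by
    have : psi rhomax kv mumax qmin vIn < psiMax rhomax mumax qmin := by
      unfold psi
      rw [div_lt_iff₀ (by linarith)]
      nlinarith
    linarith
  have h2 : psiMax rhomax mumax qmin < mumax := by
    unfold psiMax
    rw [div_lt_iff₀ hS]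
    nlinarith [mul_pos hmu (mul_pos hqmin hmu)]
  have hmd : 0 < mumax - d := by linarith
  have key : d * (rhomax + qmin * mumax) < mumax * rhomax := by
    have := h1
    unfold psiMax at this
    rw [lt_div_iff₀ hS] at this
    linarith
  have h3 : muInv mumax qmin d < qmin + rhomax / mumax := by
    unfold muInv
    have heq : qmin + rhomax / mumax = (qmin * mumax + rhomax) / mumax := by
      field_simp
    rw [heq, div_lt_div_iff₀ hmd hmu]
    nlinarith
  refine ⟨h1, h2, h3, ?_⟩
  have hq : muInv mumax qmin d = qmin * mumax / (mumax - d) := rfl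
  have hqpos : 0 < muInv mumax qmin d := by rw [hq]; positivity
  unfold mufun
  rw [hq]
  field_simp
  nlinarith
end

section
/- For α ∈ (0,1) and d > 0, the full consortium system ṡ = −(1/γ)φ(s)e + d(s_in − s), ė = (1−α)φ(s)e − de, v̇ = αβφ(s)e − ρ(v)c − dv, q̇ = ρ(v) − μ(q)q, ċ = (μ(q) − d)c admits an equilibrium with e > 0 and c > 0 if and only if d < min((1−α)·φ_max, ψ_max) and ψ_α⁻¹(d) < s_in; in that case this equilibrium is unique and given by s* = φ⁻¹(d/(1−α)), e* = (1−α)γ(s_in − s*), v* = ψ⁻¹(d), q* = μ⁻¹(d), c* = (v_in* − v*)/q* with v_in* = αβγ(s_in − s*). -/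
/-- The bacterial growth rate `φ(s) = φmax·s/(ks+s)`. -/
noncomputable def phi (phimax ks s : ℝ) : ℝ := phimax * s / (ks + s)

/-- The inverse of `φ` on `[0, φmax)`: `φ⁻¹(y) = ks·y/(φmax−y)`. -/
noncomputable def phiInv (phimax ks y : ℝ) : ℝ := ks * y / (phimax - y)

/-- `ψ_α⁻¹(y) = φ⁻¹(y/(1−α)) + ψ⁻¹(y)/(α·β·γ)`. -/
noncomputable def psiAlphaInv (phimax ks rhomax kv mumax qmin beta gamma alpha y : ℝ) : ℝ :=
  phiInv phimax ks (y / (1 - alpha)) + psiInv rhomax kv mumax qmin y / (alpha * beta * gamma)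

set_option maxHeartbeats 1000000

lemma uniq_aux (phimax ks rhomax kv mumax qmin beta gamma sIn alpha d : ℝ)
    (hphimax : 0 < phimax) (hks : 0 < ks) (hrho : 0 < rhomax) (hkv : 0 < kv)
    (hmu : 0 < mumax) (hqmin : 0 < qmin) (hbeta : 0 < beta) (hgamma : 0 < gamma)
    (hsIn : 0 < sIn) (halpha : alpha ∈ Set.Ioo (0:ℝ) 1) (hd : 0 < d)
    (s e v q c : ℝ) (hs : 0 ≤ s) (he : 0 < e) (hv : 0 ≤ v) (hq : qmin ≤ q) (hc : 0 < c)
    (eq1 : -(1/gamma) * phi phimax ks s * e + d * (sIn - s) = 0)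
    (eq2 : (1 - alpha) * phi phimax ks s * e - d * e = 0)
    (eq3 : alpha * beta * phi phimax ks s * e - rho rhomax kv v * c - d * v = 0)
    (eq4 : rho rhomax kv v - mufun mumax qmin q * q = 0)
    (eq5 : (mufun mumax qmin q - d) * c = 0) :
    d < (1 - alpha) * phimax ∧ d < psiMax rhomax mumax qmin ∧
    s = phiInv phimax ks (d / (1 - alpha)) ∧
    e = (1 - alpha) * gamma * (sIn - s) ∧
    v = psiInv rhomax kv mumax qmin d ∧
    q = muInv mumax qmin d ∧
    c = (alpha * beta * gamma * (sIn - s) - v) / q ∧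
    psiAlphaInv phimax ks rhomax kv mumax qmin beta gamma alpha d < sIn := by
  obtain ⟨ha0, ha1⟩ := halpha
  have ha1' : 0 < 1 - alpha := by linarith
  have hkss : 0 < ks + s := by linarith
  have hq0 : 0 < q := lt_of_lt_of_le hqmin hq
  have hkvv : 0 < kv + v := by linarith
  have hP : 0 < rhomax + qmin * mumax := by positivity
  -- from eq2
  have hphi : (1 - alpha) * phi phimax ks s = d := by
    have h2 : ((1 - alpha) * phi phimax ks s - d) * e = 0 := by ring_nf; ring_nf at eq2; linarith
    rcases mul_eq_zero.mp h2 with h | h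
    · linarith
    · exact absurd h (ne_of_gt he)
  have key2 : (1 - alpha) * (phimax * s) = d * (ks + s) := by
    rw [phi] at hphi
    field_simp at hphi
    linarith
  have hlt1 : d < (1 - alpha) * phimax := by
    by_contra h
    push_neg at h
    nlinarith
  have hden1 : 0 < phimax - d / (1 - alpha) := by
    rw [sub_pos, div_lt_iff₀ ha1']
    nlinarith
  have hseq : s = phiInv phimax ks (d / (1 - alpha)) := by
    rw [phiInv, eq_div_iff (ne_of_gt hden1)]
    field_simp
    nlinarith [key2]
  -- from eq5
  have hmuq : mufun mumax qmin q = d := by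
    rcases mul_eq_zero.mp eq5 with h | h
    · linarith
    · exact absurd h (ne_of_gt hc)
  have key5 : mumax * (q - qmin) = d * q := by
    rw [mufun] at hmuq
    field_simp at hmuq
    linarith
  have hltmu : d < mumax := by nlinarith
  have hqeq : q = muInv mumax qmin d := by
    rw [muInv, eq_div_iff (ne_of_gt (by linarith : (0:ℝ) < mumax - d))]
    nlinarith [key5]
  -- from eq4
  have hrhov : rho rhomax kv v = d * q := by
    have : rho rhomax kv v = mufun mumax qmin q * q := by linarith
    rw [this, hmuq]
  have key4 : rhomax * v = d * q * (kv + v) := by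
    rw [rho] at hrhov
    field_simp at hrhov
    linarith
  have hdq : 0 < d * q := by positivity
  have hrdq : d * q < rhomax := by
    by_contra h
    push_neg at h
    nlinarith
  have hlt2 : d < psiMax rhomax mumax qmin := by
    rw [psiMax, lt_div_iff₀ hP]
    nlinarith [hrdq, hqeq, key5]
  have hdenpsi : 0 < psiMax rhomax mumax qmin - d := by linarith
  have hveq : v = psiInv rhomax kv mumax qmin d := by
    rw [psiInv, eq_div_iff (ne_of_gt hdenpsi), psiMax, kC]
    field_simp
    linear_combination (mumax - d) * key4 + d * (kv + v) * key5
  -- e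
  have hphie : phi phimax ks s * e = gamma * d * (sIn - s) := by
    have h := eq1
    field_simp at h
    linarith
  have heeq : e = (1 - alpha) * gamma * (sIn - s) := by
    have h' : d * e = d * ((1 - alpha) * gamma * (sIn - s)) := by
      linear_combination (1 - alpha) * hphie - e * hphi
    exact mul_left_cancel₀ (ne_of_gt hd) h'
  -- c
  have hceq : c = (alpha * beta * gamma * (sIn - s) - v) / q := by
    rw [eq_div_iff (ne_of_gt hq0)]
    have h3 : alpha * beta * (gamma * d * (sIn - s)) - d * q * c - d * v = 0 := by
      rw [← hphie, ← hrhov]; linarith [eq3]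
    have h4 : d * (c * q) = d * (alpha * beta * gamma * (sIn - s) - v) := by
      linear_combination -h3
    exact mul_left_cancel₀ (ne_of_gt hd) h4
  -- final inequality
  have hcpos : 0 < alpha * beta * gamma * (sIn - s) - v := by
    have h := hc
    rw [hceq, div_pos_iff] at h
    rcases h with ⟨h1, -⟩ | ⟨-, h2⟩
    · exact h1
    · linarith
  refine ⟨hlt1, hlt2, hseq, heeq, hveq, hqeq, hceq, ?_⟩
  rw [psiAlphaInv, ← hseq, ← hveq]
  have habg : 0 < alpha * beta * gamma := by positivity
  have hvd : v / (alpha * beta * gamma) < sIn - s := by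
    rw [div_lt_iff₀ habg]
    nlinarith [hcpos]
  linarith

lemma phi_phiInv (phimax ks y : ℝ) (hks : 0 < ks) (hy : 0 < y) (h : y < phimax) :
    phi phimax ks (phiInv phimax ks y) = y := by
  have h1 : 0 < phimax - y := by linarith
  have h2 : 0 < ks + ks * y / (phimax - y) := by positivity
  rw [phi, phiInv, div_eq_iff (ne_of_gt h2)]
  field_simp
  ring

lemma mu_muInv (mumax qmin y : ℝ) (hqmin : 0 < qmin) (hmu : 0 < mumax) (hy : 0 < y)
    (h : y < mumax) : mufun mumax qmin (muInv mumax qmin y) = y := by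
  have h1 : 0 < mumax - y := by linarith
  rw [mufun, muInv]
  field_simp
  ring

lemma rho_psiInv (rhomax kv mumax qmin y : ℝ) (hrho : 0 < rhomax) (hkv : 0 < kv)
    (hmu : 0 < mumax) (hqmin : 0 < qmin) (hy : 0 < y) (h : y < psiMax rhomax mumax qmin) :
    rho rhomax kv (psiInv rhomax kv mumax qmin y) = y * muInv mumax qmin y := by
  have hP : 0 < rhomax + qmin * mumax := by positivity
  have hltmu : y < mumax := by
    have : psiMax rhomax mumax qmin < mumax := by
      rw [psiMax, div_lt_iff₀ hP]; nlinarith [mul_pos hmu (mul_pos hqmin hmu)]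
    linarith
  have h1 : 0 < mumax - y := by linarith
  have hden : 0 < psiMax rhomax mumax qmin - y := by linarith
  have hv0 : 0 < psiInv rhomax kv mumax qmin y := by
    rw [psiInv, kC]
    have : 0 < kC rhomax kv mumax qmin * y := by rw [kC]; positivity
    rw [kC] at this
    exact div_pos this hden
  have h2 : 0 < kv + psiInv rhomax kv mumax qmin y := by linarith
  rw [rho, div_eq_iff (ne_of_gt h2)]
  rw [psiInv, psiMax, kC] at *
  have h3 : mumax * rhomax / (rhomax + qmin * mumax) - y =
      (mumax * rhomax - y * (rhomax + qmin * mumax)) / (rhomax + qmin * mumax) := by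
    field_simp
  have h4 : 0 < mumax * rhomax - y * (rhomax + qmin * mumax) := by
    rw [h3] at hden
    exact (div_pos_iff.mp hden).resolve_right (by rintro ⟨-, hh⟩; linarith) |>.1
  rw [muInv, h3]
  have h5 : rhomax * mumax - rhomax * y - mumax * y * qmin ≠ 0 := by
    have : 0 < rhomax * mumax - rhomax * y - mumax * y * qmin := by linarith [h4]
    exact this.ne'
  field_simp [hP.ne', h1.ne', h4.ne', h5]
  have h6 : rhomax * mumax - (rhomax + qmin * mumax) * y ≠ 0 := by
    have : 0 < rhomax * mumax - (rhomax + qmin * mumax) * y := by linarith [h4]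
    exact this.ne'
  rw [div_eq_iff h6, add_mul, div_mul_cancel₀ _ h6]
  ring

/-- For `α ∈ (0,1)` and `d > 0`, the full consortium system admits an equilibrium with
`e > 0` and `c > 0` iff `d < min((1−α)·φmax, ψmax)` and `ψ_α⁻¹(d) < s_in`; in that case this
equilibrium is unique and given by `s* = φ⁻¹(d/(1−α))`, `e* = (1−α)γ(s_in − s*)`,
`v* = ψ⁻¹(d)`, `q* = μ⁻¹(d)`, `c* = (v_in* − v*)/q*` with `v_in* = αβγ(s_in − s*)`. -/
theorem consortium_equilibrium (phimax ks rhomax kv mumax qmin beta gamma sIn alpha d : ℝ)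
    (hphimax : 0 < phimax) (hks : 0 < ks) (hrho : 0 < rhomax) (hkv : 0 < kv)
    (hmu : 0 < mumax) (hqmin : 0 < qmin) (hbeta : 0 < beta) (hgamma : 0 < gamma)
    (hsIn : 0 < sIn) (halpha : alpha ∈ Set.Ioo (0:ℝ) 1) (hd : 0 < d) :
    ((∃ s e v q c : ℝ, 0 ≤ s ∧ 0 < e ∧ 0 ≤ v ∧ qmin ≤ q ∧ 0 < c ∧
        -(1/gamma) * phi phimax ks s * e + d * (sIn - s) = 0 ∧
        (1 - alpha) * phi phimax ks s * e - d * e = 0 ∧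
        alpha * beta * phi phimax ks s * e - rho rhomax kv v * c - d * v = 0 ∧
        rho rhomax kv v - mufun mumax qmin q * q = 0 ∧
        (mufun mumax qmin q - d) * c = 0)
      ↔ (d < min ((1 - alpha) * phimax) (psiMax rhomax mumax qmin) ∧
          psiAlphaInv phimax ks rhomax kv mumax qmin beta gamma alpha d < sIn)) ∧
    (∀ s e v q c : ℝ, 0 ≤ s → 0 < e → 0 ≤ v → qmin ≤ q → 0 < c →
        -(1/gamma) * phi phimax ks s * e + d * (sIn - s) = 0 →
        (1 - alpha) * phi phimax ks s * e - d * e = 0 →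
        alpha * beta * phi phimax ks s * e - rho rhomax kv v * c - d * v = 0 →
        rho rhomax kv v - mufun mumax qmin q * q = 0 →
        (mufun mumax qmin q - d) * c = 0 →
        s = phiInv phimax ks (d / (1 - alpha)) ∧
        e = (1 - alpha) * gamma * (sIn - s) ∧
        v = psiInv rhomax kv mumax qmin d ∧
        q = muInv mumax qmin d ∧
        c = (alpha * beta * gamma * (sIn - s) - v) / q) := by
  obtain ⟨ha0, ha1⟩ := halpha
  have ha1' : 0 < 1 - alpha := by linarith
  have hP : 0 < rhomax + qmin * mumax := by positivity
  have habg : 0 < alpha * beta * gamma := by positivity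
  constructor
  · constructor
    · rintro ⟨s, e, v, q, c, hs, he, hv, hq, hc, eq1, eq2, eq3, eq4, eq5⟩
      obtain ⟨h1, h2, -, -, -, -, -, h8⟩ := uniq_aux phimax ks rhomax kv mumax qmin beta gamma
        sIn alpha d hphimax hks hrho hkv hmu hqmin hbeta hgamma hsIn ⟨ha0, ha1⟩ hd
        s e v q c hs he hv hq hc eq1 eq2 eq3 eq4 eq5
      exact ⟨lt_min h1 h2, h8⟩
    · rintro ⟨hmin, hsin⟩
      have hlt1 : d < (1 - alpha) * phimax := lt_of_lt_of_le hmin (min_le_left _ _)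
      have hlt2 : d < psiMax rhomax mumax qmin := lt_of_lt_of_le hmin (min_le_right _ _)
      have hltmu : d < mumax := by
        have : psiMax rhomax mumax qmin < mumax := by
          rw [psiMax, div_lt_iff₀ hP]; nlinarith [mul_pos hmu (mul_pos hqmin hmu)]
        linarith
      have hdpos : 0 < d / (1 - alpha) := by positivity
      have hdlt : d / (1 - alpha) < phimax := by rw [div_lt_iff₀ ha1']; nlinarith
      set s := phiInv phimax ks (d / (1 - alpha)) with hsdef
      set v := psiInv rhomax kv mumax qmin d with hvdef
      set q := muInv mumax qmin d with hqdef
      set e := (1 - alpha) * gamma * (sIn - s) with hedef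
      set c := (alpha * beta * gamma * (sIn - s) - v) / q with hcdef
      have hden1 : 0 < phimax - d / (1 - alpha) := by linarith
      have hs0 : 0 ≤ s := by
        rw [hsdef, phiInv]
        exact le_of_lt (div_pos (by positivity) hden1)
      have hdenpsi : 0 < psiMax rhomax mumax qmin - d := by linarith
      have hv0 : 0 < v := by
        rw [hvdef, psiInv, kC]
        have hkc : 0 < kv * qmin * mumax / (rhomax + qmin * mumax) * d := by positivity
        exact div_pos hkc hdenpsi
      have hq0 : 0 < mumax - d := by linarith
      have hqge : qmin ≤ q := by
        rw [hqdef, muInv, le_div_iff₀ hq0]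
        nlinarith
      have hqpos : 0 < q := lt_of_lt_of_le hqmin hqge
      have hsv : s + v / (alpha * beta * gamma) < sIn := by
        rw [psiAlphaInv] at hsin
        exact hsin
      have hvs : v < alpha * beta * gamma * (sIn - s) := by
        have : v / (alpha * beta * gamma) < sIn - s := by linarith
        rw [div_lt_iff₀ habg] at this
        linarith
      have hssIn : s < sIn := by
        have : 0 ≤ v / (alpha * beta * gamma) := div_nonneg hv0.le habg.le
        linarith
      have hepos : 0 < e := by
        rw [hedef]
        exact mul_pos (mul_pos ha1' hgamma) (by linarith)
      have hcpos : 0 < c := by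
        rw [hcdef]
        exact div_pos (by linarith) hqpos
      have hphis : phi phimax ks s = d / (1 - alpha) :=
        phi_phiInv phimax ks _ hks hdpos hdlt
      have hmus : mufun mumax qmin q = d :=
        mu_muInv mumax qmin d hqmin hmu hd hltmu
      have hrhos : rho rhomax kv v = d * q :=
        rho_psiInv rhomax kv mumax qmin d hrho hkv hmu hqmin hd hlt2
      refine ⟨s, e, v, q, c, hs0, hepos, hv0.le, hqge, hcpos, ?_, ?_, ?_, ?_, ?_⟩
      · rw [hphis, hedef]
        field_simp
        ring
      · rw [hphis]
        field_simp
        ring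
      · rw [hphis, hrhos, hedef, hcdef]
        field_simp
        ring
      · rw [hrhos, hmus]
        ring
      · rw [hmus]
        ring
  · intro s e v q c hs he hv hq hc eq1 eq2 eq3 eq4 eq5
    obtain ⟨-, -, h3, h4, h5, h6, h7, -⟩ := uniq_aux phimax ks rhomax kv mumax qmin beta gamma
      sIn alpha d hphimax hks hrho hkv hmu hqmin hbeta hgamma hsIn ⟨ha0, ha1⟩ hd
      s e v q c hs he hv hq hc eq1 eq2 eq3 eq4 eq5
    exact ⟨h3, h4, h5, h6, h7⟩
end

section
/- Fix 0 < d < φ_max and constants β, γ, s_in > 0. Then the function h(α) = s_in − φ⁻¹(d/(1−α)) is strictly decreasing and strictly concave on the interval (0, 1 − d/φ_max), and the function α ↦ v_in*(α,d) = α·β·γ·h(α) is strictly concave on (0, 1 − d/φ_max). -/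
open Set

/-- Strict concavity of `x ↦ m·x + c − K·(a − b·x)⁻¹` on `(0, a/b)`. -/
lemma aux_strictConcave (a b K m c : ℝ) (ha : 0 < a) (hb : 0 < b) (hK : 0 < K) :
    StrictConcaveOn ℝ (Set.Ioo (0:ℝ) (a/b))
      (fun x => m * x + c - K * (a - b * x)⁻¹) := by
  set f : ℝ → ℝ := fun x => m * x + c - K * (a - b * x)⁻¹ with hf
  set f' : ℝ → ℝ := fun x => m - K * (b * ((a - b * x)^2)⁻¹) with hf'
  have hIoo : IsOpen (Set.Ioo (0:ℝ) (a/b)) := isOpen_Ioo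
  have hupos : ∀ x ∈ Set.Ioo (0:ℝ) (a/b), 0 < a - b * x := by
    intro x hx
    have : b * x < a := by
      calc b * x < b * (a/b) := by nlinarith [hx.2]
        _ = a := by field_simp
    linarith
  have hu : ∀ x : ℝ, HasDerivAt (fun x => a - b * x) (-b) x := by
    intro x
    simpa using ((hasDerivAt_id' x).const_mul b).const_sub a
  have hderiv : ∀ x ∈ Set.Ioo (0:ℝ) (a/b), HasDerivAt f (f' x) x := by
    intro x hx
    have hne : a - b * x ≠ 0 := ne_of_gt (hupos x hx)
    have hinv : HasDerivAt (fun x => (a - b * x)⁻¹) (b * ((a - b*x)^2)⁻¹) x := by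
      have : HasDerivAt (fun x => (a - b * x)⁻¹) (- -b / (a - b * x) ^ 2) x := (hu x).inv hne
      convert this using 1
      ring
    have : HasDerivAt f (m * 1 - K * (b * ((a - b*x)^2)⁻¹)) x :=
      ((((hasDerivAt_id x).const_mul m)).add_const c).sub (hinv.const_mul K)
    simpa [hf'] using this
  apply strictConcaveOn_of_deriv2_neg (convex_Ioo _ _)
  · apply ContinuousOn.sub
    · fun_prop
    · apply ContinuousOn.mul continuousOn_const
      apply ContinuousOn.inv₀ (by fun_prop)
      intro x hx; exact ne_of_gt (hupos x hx)
  · intro x hx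
    rw [interior_Ioo] at hx
    have heq : Set.EqOn (deriv f) f' (Set.Ioo (0:ℝ) (a/b)) := fun y hy => (hderiv y hy).deriv
    have hev : deriv f =ᶠ[nhds x] f' := heq.eventuallyEq_of_mem (hIoo.mem_nhds hx)
    show deriv (deriv f) x < 0
    rw [hev.deriv_eq]
    have hne : a - b * x ≠ 0 := ne_of_gt (hupos x hx)
    have h2 : HasDerivAt (fun y => (a - b*y)^2) (2 * (a - b*x) ^ 1 * (-b)) x := (hu x).pow 2
    have h2' : ((a - b*x)^2) ≠ 0 := pow_ne_zero _ hne
    have hinv2 : HasDerivAt (fun y => ((a - b*y)^2)⁻¹)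
        (-(2 * (a - b*x) ^ 1 * (-b)) / ((a - b*x)^2)^2) x := h2.inv h2'
    have hD : HasDerivAt f' (0 - K * (b * (-(2 * (a - b*x) ^ 1 * (-b)) / ((a - b*x)^2)^2))) x :=
      (hasDerivAt_const x m).sub (((hinv2.const_mul b)).const_mul K)
    rw [hD.deriv]
    have heval : 0 - K * (b * (-(2 * (a - b*x) ^ 1 * (-b)) / ((a - b*x)^2)^2))
        = -(2 * K * b^2 / (a - b*x)^3) := by
      field_simp
      ring
    rw [heval]
    have := hupos x hx
    have : 0 < 2 * K * b^2 / (a - b*x)^3 := by positivity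
    linarith

/-- Transfer strict concavity along equality on the set. -/
lemma strictConcaveOn_congr {s : Set ℝ} {f g : ℝ → ℝ} (h : StrictConcaveOn ℝ s g)
    (he : Set.EqOn f g s) : StrictConcaveOn ℝ s f := by
  refine ⟨h.1, fun x hx y hy hxy a b ha hb hab => ?_⟩
  have hm : a • x + b • y ∈ s := h.1 hx hy ha.le hb.le hab
  rw [he hx, he hy, he hm]
  exact h.2 hx hy hxy ha hb hab

/-- Fix `0 < d < φmax` and `β, γ, s_in > 0`. Then `h(α) = s_in − φ⁻¹(d/(1−α))` is strictly
decreasing and strictly concave on `(0, 1 − d/φmax)`, and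
`α ↦ v_in*(α,d) = α·β·γ·h(α)` is strictly concave on `(0, 1 − d/φmax)`. -/
theorem h_and_vin_concavity (phimax ks beta gamma sIn d : ℝ)
    (hphimax : 0 < phimax) (hks : 0 < ks) (hbeta : 0 < beta) (hgamma : 0 < gamma)
    (hsIn : 0 < sIn) (hd0 : 0 < d) (hd : d < phimax) :
    StrictAntiOn (fun alpha : ℝ => sIn - phiInv phimax ks (d / (1 - alpha)))
      (Set.Ioo 0 (1 - d / phimax)) ∧
    StrictConcaveOn ℝ (Set.Ioo 0 (1 - d / phimax))
      (fun alpha : ℝ => sIn - phiInv phimax ks (d / (1 - alpha))) ∧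
    StrictConcaveOn ℝ (Set.Ioo 0 (1 - d / phimax))
      (fun alpha : ℝ =>
        alpha * beta * gamma * (sIn - phiInv phimax ks (d / (1 - alpha)))) := by
  have hI : (1 : ℝ) - d / phimax = (phimax - d) / phimax := by field_simp
  have ha : 0 < phimax - d := by linarith
  -- basic facts on the interval
  have hfacts : ∀ x ∈ Set.Ioo (0:ℝ) (1 - d / phimax),
      0 < 1 - x ∧ 0 < phimax - d - phimax * x := by
    intro x hx
    obtain ⟨hx0, hx1⟩ := hx
    have h1 : d / phimax > 0 := by positivity
    have h2 : x < (phimax - d)/phimax := by rwa [hI] at hx1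
    have h3 : phimax * x < phimax - d := by
      calc phimax * x < phimax * ((phimax - d)/phimax) := by nlinarith
        _ = phimax - d := by field_simp
    constructor <;> [linarith; linarith]
  -- pointwise rewriting of phiInv
  have hphi : ∀ x ∈ Set.Ioo (0:ℝ) (1 - d / phimax),
      phiInv phimax ks (d / (1 - x)) = ks * d * (phimax - d - phimax * x)⁻¹ := by
    intro x hx
    obtain ⟨h1, h2⟩ := hfacts x hx
    have hne1 : (1:ℝ) - x ≠ 0 := ne_of_gt h1
    have hne2 : phimax - d - phimax * x ≠ 0 := ne_of_gt h2
    have hne3 : phimax - d / (1 - x) ≠ 0 := by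
      have : phimax - d / (1 - x) = (phimax - d - phimax * x) / (1 - x) := by
        field_simp; ring
      rw [this]
      positivity
    unfold phiInv
    rw [show phimax - d / (1 - x) = (phimax - d - phimax * x) / (1 - x) by field_simp; ring,
      div_div_eq_mul_div, mul_assoc, div_mul_cancel₀ _ hne1, div_eq_mul_inv]
  refine ⟨?_, ?_, ?_⟩
  · -- strictly decreasing
    intro x hx y hy hxy
    obtain ⟨hx1, hx2⟩ := hfacts x hx
    obtain ⟨hy1, hy2⟩ := hfacts y hy
    simp only
    rw [hphi x hx, hphi y hy]
    have hlt : phimax - d - phimax * y < phimax - d - phimax * x := by nlinarith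
    have hinvlt : (phimax - d - phimax * x)⁻¹ < (phimax - d - phimax * y)⁻¹ := by
      have := one_div_lt_one_div_of_lt hy2 hlt
      rwa [one_div, one_div] at this
    have := mul_lt_mul_of_pos_left hinvlt (show (0:ℝ) < ks * d by positivity)
    linarith
  · -- strict concavity of h
    have hbase := aux_strictConcave (phimax - d) phimax (ks * d) 0 sIn ha hphimax
      (by positivity)
    rw [← hI] at hbase
    refine strictConcaveOn_congr hbase ?_
    intro x hx
    simp only
    rw [hphi x hx]
    ring
  · -- strict concavity of v
    have hbase := aux_strictConcave (phimax - d) phimax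
      (beta * gamma * ks * d * (phimax - d) / phimax)
      (beta * gamma * sIn) (beta * gamma * ks * d / phimax) ha hphimax (by positivity)
    rw [← hI] at hbase
    refine strictConcaveOn_congr hbase ?_
    intro x hx
    obtain ⟨h1, h2⟩ := hfacts x hx
    have hne2 : phimax - d - phimax * x ≠ 0 := ne_of_gt h2
    simp only
    rw [hphi x hx]
    field_simp
    have hU : -(x * phimax) + phimax - d ≠ 0 := by intro h; apply hne2; linarith
    linear_combination (ks * d) * mul_inv_cancel₀ hU
end

section
/- (Lemma 2) Fix α ∈ (0,1) and constants β, γ, s_in > 0. On the set D_α = {d ∈ (0, min((1−α)·φ_max, ψ_max)) : ψ_α⁻¹(d) < s_in}, the function d ↦ f_0*(α,d) = (s_in − ψ_α⁻¹(d))·(α·β·γ·d/μ⁻¹(d)) is strictly positive and strictly logarithmically concave, i.e. d ↦ ln f_0*(α,d) is strictly concave on D_α. -/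
/-- Convexity two-point inequality for `A/(·)`. -/
lemma div_combo {A p q a b : ℝ} (hA : 0 ≤ A) (hp : 0 < p) (hq : 0 < q)
    (ha : 0 < a) (hb : 0 < b) (hab : a + b = 1) :
    A / (a * p + b * q) ≤ a * (A / p) + b * (A / q) := by
  have h1 : a * (A / p) + b * (A / q) = A * (a * q + b * p) / (p * q) := by
    field_simp
  rw [h1, div_le_div_iff₀ (by positivity) (by positivity)]
  have key : A * (a * q + b * p) * (a * p + b * q) = A * (p * q) + A * (a * b) * (p - q) ^ 2 := by
    linear_combination A * p * q * (a + b + 1) * hab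
  nlinarith [key, mul_nonneg (mul_nonneg hA (mul_pos ha hb).le) (sq_nonneg (p - q))]

/-- Closed form for `ψ_α⁻¹` as a sum of two reciprocal terms. -/
lemma g_eq (phimax ks rhomax kv mumax qmin beta gamma alpha d : ℝ)
    (hrho : 0 < rhomax) (hmu : 0 < mumax) (hqmin : 0 < qmin)
    (hbeta : 0 < beta) (hgamma : 0 < gamma) (halpha : alpha ∈ Set.Ioo (0:ℝ) 1)
    (hd1 : d < (1 - alpha) * phimax) (hd2 : d < psiMax rhomax mumax qmin) :
    psiAlphaInv phimax ks rhomax kv mumax qmin beta gamma alpha d =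
      ks * ((1 - alpha) * phimax) / ((1 - alpha) * phimax - d)
        + (kC rhomax kv mumax qmin / (alpha * beta * gamma)) * psiMax rhomax mumax qmin
            / (psiMax rhomax mumax qmin - d)
        - (ks + kC rhomax kv mumax qmin / (alpha * beta * gamma)) := by
  obtain ⟨ha0, ha1⟩ := halpha
  have h1a : (0:ℝ) < 1 - alpha := by linarith
  have hden1 : (1 - alpha) * phimax - d ≠ 0 := by
    have : (0:ℝ) < (1 - alpha) * phimax - d := by linarith
    exact this.ne'
  have hden2 : psiMax rhomax mumax qmin - d ≠ 0 := by
    have : (0:ℝ) < psiMax rhomax mumax qmin - d := by linarith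
    exact this.ne'
  have hden3 : phimax - d / (1 - alpha) = ((1 - alpha) * phimax - d) / (1 - alpha) := by
    rw [eq_div_iff h1a.ne', sub_mul, div_mul_cancel₀ _ h1a.ne']; ring
  have habg : alpha * beta * gamma ≠ 0 := by positivity
  have hphi : phiInv phimax ks (d / (1 - alpha)) = ks * d / ((1 - alpha) * phimax - d) := by
    unfold phiInv
    rw [hden3]
    rw [← mul_div_assoc, div_div_div_cancel_right₀]
    exact h1a.ne'
  unfold psiAlphaInv psiInv
  rw [hphi]
  field_simp
  ring


set_option maxHeartbeats 1000000 in
/-- (Lemma 2) Fix `α ∈ (0,1)` and `β, γ, s_in > 0`. On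
`D_α = {d ∈ (0, min((1−α)·φmax, ψmax)) : ψ_α⁻¹(d) < s_in}`, the function
`d ↦ f_0*(α,d) = (s_in − ψ_α⁻¹(d))·(α·β·γ·d/μ⁻¹(d))` is strictly positive and strictly
logarithmically concave, i.e. `d ↦ ln f_0*(α,d)` is strictly concave on `D_α`. -/
theorem f0_strictly_logconcave_in_d (phimax ks rhomax kv mumax qmin beta gamma sIn alpha : ℝ)
    (hphimax : 0 < phimax) (hks : 0 < ks) (hrho : 0 < rhomax) (hkv : 0 < kv)
    (hmu : 0 < mumax) (hqmin : 0 < qmin) (hbeta : 0 < beta) (hgamma : 0 < gamma)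
    (hsIn : 0 < sIn) (halpha : alpha ∈ Set.Ioo (0:ℝ) 1) :
    (∀ d ∈ {d ∈ Set.Ioo 0 (min ((1 - alpha) * phimax) (psiMax rhomax mumax qmin)) |
        psiAlphaInv phimax ks rhomax kv mumax qmin beta gamma alpha d < sIn},
      0 < (sIn - psiAlphaInv phimax ks rhomax kv mumax qmin beta gamma alpha d)
            * (alpha * beta * gamma * d / muInv mumax qmin d)) ∧
    StrictConcaveOn ℝ
      {d ∈ Set.Ioo 0 (min ((1 - alpha) * phimax) (psiMax rhomax mumax qmin)) |
        psiAlphaInv phimax ks rhomax kv mumax qmin beta gamma alpha d < sIn}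
      (fun d : ℝ =>
        Real.log ((sIn - psiAlphaInv phimax ks rhomax kv mumax qmin beta gamma alpha d)
            * (alpha * beta * gamma * d / muInv mumax qmin d))) := by

  obtain ⟨ha0, ha1⟩ := halpha
  have h1a : (0:ℝ) < 1 - alpha := by linarith
  have habg : 0 < alpha * beta * gamma := by positivity
  have hK1 : 0 < ((1 - alpha) * phimax) := by positivity
  have hK2 : 0 < (psiMax rhomax mumax qmin) := by unfold psiMax; positivity
  have hc2 : 0 < (kC rhomax kv mumax qmin / (alpha * beta * gamma)) := by unfold kC; positivity
  have hK2mu : (psiMax rhomax mumax qmin) < mumax := by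
    unfold psiMax
    rw [div_lt_iff₀ (by positivity)]
    nlinarith [mul_pos hmu (mul_pos hqmin hmu)]
  have hmemS : ∀ d ∈ {d ∈ Set.Ioo 0 (min ((1 - alpha) * phimax) (psiMax rhomax mumax qmin)) |
        psiAlphaInv phimax ks rhomax kv mumax qmin beta gamma alpha d < sIn}, 0 < d ∧ d < ((1 - alpha) * phimax) ∧ d < (psiMax rhomax mumax qmin) ∧ d < mumax ∧
      0 < sIn - psiAlphaInv phimax ks rhomax kv mumax qmin beta gamma alpha d := by
    intro d hd
    simp only [Set.mem_setOf_eq, Set.mem_Ioo, lt_min_iff] at hd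
    obtain ⟨⟨hd0, hdK1, hdK2⟩, hdg⟩ := hd
    exact ⟨hd0, hdK1, hdK2, hdK2.trans hK2mu, by linarith⟩
  have geq : ∀ d : ℝ, d < ((1 - alpha) * phimax) → d < (psiMax rhomax mumax qmin) →
      psiAlphaInv phimax ks rhomax kv mumax qmin beta gamma alpha d = ks * ((1 - alpha) * phimax) / (((1 - alpha) * phimax) - d) + (kC rhomax kv mumax qmin / (alpha * beta * gamma)) * (psiMax rhomax mumax qmin) / ((psiMax rhomax mumax qmin) - d) - (ks + (kC rhomax kv mumax qmin / (alpha * beta * gamma))) :=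
    fun d h1 h2 => g_eq phimax ks rhomax kv mumax qmin beta gamma alpha d
      hrho hmu hqmin hbeta hgamma ⟨ha0, ha1⟩ h1 h2
  have gcombo : ∀ x y a b : ℝ, 0 < x → x < ((1 - alpha) * phimax) → x < (psiMax rhomax mumax qmin) → 0 < y → y < ((1 - alpha) * phimax) → y < (psiMax rhomax mumax qmin) →
      0 < a → 0 < b → a + b = 1 →
      psiAlphaInv phimax ks rhomax kv mumax qmin beta gamma alpha (a * x + b * y) ≤ a * psiAlphaInv phimax ks rhomax kv mumax qmin beta gamma alpha x + b * psiAlphaInv phimax ks rhomax kv mumax qmin beta gamma alpha y := by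
    intro x y a b hx0 hx1 hx2 hy0 hy1 hy2 ha hb hab
    have hK1ab : a * ((1 - alpha) * phimax) + b * ((1 - alpha) * phimax) = ((1 - alpha) * phimax) := by linear_combination ((1 - alpha) * phimax) * hab
    have hK2ab : a * (psiMax rhomax mumax qmin) + b * (psiMax rhomax mumax qmin) = (psiMax rhomax mumax qmin) := by linear_combination (psiMax rhomax mumax qmin) * hab
    have ht1 : a * x + b * y < ((1 - alpha) * phimax) := by
      nlinarith [mul_pos ha (sub_pos.mpr hx1), mul_pos hb (sub_pos.mpr hy1)]
    have ht2 : a * x + b * y < (psiMax rhomax mumax qmin) := by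
      nlinarith [mul_pos ha (sub_pos.mpr hx2), mul_pos hb (sub_pos.mpr hy2)]
    rw [geq _ hx1 hx2, geq _ hy1 hy2, geq _ ht1 ht2]
    have e1 : ((1 - alpha) * phimax) - (a * x + b * y) = a * (((1 - alpha) * phimax) - x) + b * (((1 - alpha) * phimax) - y) := by
      linear_combination (-((1 - alpha) * phimax)) * hab
    have e2 : (psiMax rhomax mumax qmin) - (a * x + b * y) = a * ((psiMax rhomax mumax qmin) - x) + b * ((psiMax rhomax mumax qmin) - y) := by
      linear_combination (-(psiMax rhomax mumax qmin)) * hab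
    have i1 : ks * ((1 - alpha) * phimax) / (((1 - alpha) * phimax) - (a * x + b * y)) ≤
        a * (ks * ((1 - alpha) * phimax) / (((1 - alpha) * phimax) - x)) + b * (ks * ((1 - alpha) * phimax) / (((1 - alpha) * phimax) - y)) := by
      rw [e1]
      exact div_combo (mul_pos hks hK1).le (by linarith) (by linarith) ha hb hab
    have i2 : (kC rhomax kv mumax qmin / (alpha * beta * gamma)) * (psiMax rhomax mumax qmin) / ((psiMax rhomax mumax qmin) - (a * x + b * y)) ≤
        a * ((kC rhomax kv mumax qmin / (alpha * beta * gamma)) * (psiMax rhomax mumax qmin) / ((psiMax rhomax mumax qmin) - x)) + b * ((kC rhomax kv mumax qmin / (alpha * beta * gamma)) * (psiMax rhomax mumax qmin) / ((psiMax rhomax mumax qmin) - y)) := by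
      rw [e2]
      exact div_combo (mul_pos hc2 hK2).le (by linarith) (by linarith) ha hb hab
    have hCab : a * (ks + (kC rhomax kv mumax qmin / (alpha * beta * gamma))) + b * (ks + (kC rhomax kv mumax qmin / (alpha * beta * gamma))) = ks + (kC rhomax kv mumax qmin / (alpha * beta * gamma)) := by
      linear_combination (ks + (kC rhomax kv mumax qmin / (alpha * beta * gamma))) * hab
    linarith [i1, i2, hCab]
  have hconv : Convex ℝ {d ∈ Set.Ioo 0 (min ((1 - alpha) * phimax) (psiMax rhomax mumax qmin)) |
        psiAlphaInv phimax ks rhomax kv mumax qmin beta gamma alpha d < sIn} := by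
    intro x hx y hy a b ha hb hab
    obtain ⟨hx0, hx1, hx2, hxmu, hxu⟩ := hmemS x hx
    obtain ⟨hy0, hy1, hy2, hymu, hyu⟩ := hmemS y hy
    rcases ha.lt_or_eq with ha' | ha'
    · rcases hb.lt_or_eq with hb' | hb'
      · have hsab : a * sIn + b * sIn = sIn := by linear_combination sIn * hab
        have hK1ab : a * ((1 - alpha) * phimax) + b * ((1 - alpha) * phimax) = ((1 - alpha) * phimax) := by linear_combination ((1 - alpha) * phimax) * hab
        have hK2ab : a * (psiMax rhomax mumax qmin) + b * (psiMax rhomax mumax qmin) = (psiMax rhomax mumax qmin) := by linear_combination (psiMax rhomax mumax qmin) * hab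
        simp only [Set.mem_setOf_eq, Set.mem_Ioo, lt_min_iff, smul_eq_mul]
        refine ⟨⟨add_pos (mul_pos ha' hx0) (mul_pos hb' hy0), ?_, ?_⟩, ?_⟩
        · nlinarith [mul_pos ha' (sub_pos.mpr hx1), mul_pos hb' (sub_pos.mpr hy1)]
        · nlinarith [mul_pos ha' (sub_pos.mpr hx2), mul_pos hb' (sub_pos.mpr hy2)]
        · have h := gcombo x y a b hx0 hx1 hx2 hy0 hy1 hy2 ha' hb' hab
          have hgx : psiAlphaInv phimax ks rhomax kv mumax qmin beta gamma alpha x < sIn := by linarith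
          have hgy : psiAlphaInv phimax ks rhomax kv mumax qmin beta gamma alpha y < sIn := by linarith
          have hax := mul_lt_mul_of_pos_left hgx ha'
          have hby := mul_lt_mul_of_pos_left hgy hb'
          linarith [h, hax, hby, hsab]
      · have ha1' : a = 1 := by linarith
        have hb0' : b = 0 := by linarith
        simpa [ha1', hb0'] using hx
    · have hb1' : b = 1 := by linarith
      have ha0' : a = 0 := by linarith
      simpa [ha0', hb1'] using hy
  have hFeq : ∀ d ∈ {d ∈ Set.Ioo 0 (min ((1 - alpha) * phimax) (psiMax rhomax mumax qmin)) |
        psiAlphaInv phimax ks rhomax kv mumax qmin beta gamma alpha d < sIn},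
      Real.log ((sIn - psiAlphaInv phimax ks rhomax kv mumax qmin beta gamma alpha d) * (alpha * beta * gamma * d / muInv mumax qmin d)) =
        Real.log (sIn - psiAlphaInv phimax ks rhomax kv mumax qmin beta gamma alpha d) + (Real.log (alpha * beta * gamma) + Real.log d
          + Real.log (mumax - d) - Real.log (qmin * mumax)) := by
    intro d hd
    obtain ⟨hd0, hd1, hd2, hdmu, hdu⟩ := hmemS d hd
    have hmd : (0:ℝ) < mumax - d := by linarith
    have hQ : alpha * beta * gamma * d / muInv mumax qmin d =
        alpha * beta * gamma * d * (mumax - d) / (qmin * mumax) := by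
      unfold muInv
      rw [div_div_eq_mul_div]
    have hnum : (0:ℝ) < alpha * beta * gamma * d * (mumax - d) :=
      mul_pos (mul_pos habg hd0) hmd
    rw [hQ, Real.log_mul hdu.ne' (by positivity),
      Real.log_div hnum.ne' (by positivity : (0:ℝ) < qmin * mumax).ne',
      Real.log_mul (mul_pos habg hd0).ne' hmd.ne', Real.log_mul habg.ne' hd0.ne']
  refine ⟨?_, hconv, ?_⟩
  · intro d hd
    obtain ⟨hd0, hd1, hd2, hdmu, hdu⟩ := hmemS d hd
    have hmuInv : 0 < muInv mumax qmin d := by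
      unfold muInv
      exact div_pos (by positivity) (by linarith)
    exact mul_pos hdu (div_pos (mul_pos habg hd0) hmuInv)
  · intro x hx y hy hxy a b ha hb hab
    obtain ⟨hx0, hx1, hx2, hxmu, hxu⟩ := hmemS x hx
    obtain ⟨hy0, hy1, hy2, hymu, hyu⟩ := hmemS y hy
    have htS : a * x + b * y ∈ {d ∈ Set.Ioo 0 (min ((1 - alpha) * phimax) (psiMax rhomax mumax qmin)) |
        psiAlphaInv phimax ks rhomax kv mumax qmin beta gamma alpha d < sIn} := by
      simpa [smul_eq_mul] using hconv hx hy ha.le hb.le hab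
    simp only [smul_eq_mul]
    rw [hFeq x hx, hFeq y hy, hFeq _ htS]
    have h_logd : a * Real.log x + b * Real.log y < Real.log (a * x + b * y) := by
      simpa [smul_eq_mul] using
        strictConcaveOn_log_Ioi.2 (Set.mem_Ioi.mpr hx0) (Set.mem_Ioi.mpr hy0) hxy ha hb hab
    have h_logm : a * Real.log (mumax - x) + b * Real.log (mumax - y) ≤
        Real.log (mumax - (a * x + b * y)) := by
      have h := strictConcaveOn_log_Ioi.concaveOn.2
        (Set.mem_Ioi.mpr (show (0:ℝ) < mumax - x by linarith))
        (Set.mem_Ioi.mpr (show (0:ℝ) < mumax - y by linarith)) ha.le hb.le hab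
      have e : a * (mumax - x) + b * (mumax - y) = mumax - (a * x + b * y) := by
        linear_combination mumax * hab
      simp only [smul_eq_mul] at h
      rwa [e] at h
    have h_logu : a * Real.log (sIn - psiAlphaInv phimax ks rhomax kv mumax qmin beta gamma alpha x) + b * Real.log (sIn - psiAlphaInv phimax ks rhomax kv mumax qmin beta gamma alpha y) ≤
        Real.log (sIn - psiAlphaInv phimax ks rhomax kv mumax qmin beta gamma alpha (a * x + b * y)) := by
      have h1 := strictConcaveOn_log_Ioi.concaveOn.2
        (Set.mem_Ioi.mpr hxu) (Set.mem_Ioi.mpr hyu) ha.le hb.le hab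
      simp only [smul_eq_mul] at h1
      have hsab : a * sIn + b * sIn = sIn := by linear_combination sIn * hab
      have h2 : a * (sIn - psiAlphaInv phimax ks rhomax kv mumax qmin beta gamma alpha x) + b * (sIn - psiAlphaInv phimax ks rhomax kv mumax qmin beta gamma alpha y) ≤ sIn - psiAlphaInv phimax ks rhomax kv mumax qmin beta gamma alpha (a * x + b * y) := by
        have := gcombo x y a b hx0 hx1 hx2 hy0 hy1 hy2 ha hb hab
        linarith
      have h3 := Real.log_le_log (add_pos (mul_pos ha hxu) (mul_pos hb hyu)) h2
      linarith
    have hc1 : a * Real.log (alpha * beta * gamma) + b * Real.log (alpha * beta * gamma) =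
        Real.log (alpha * beta * gamma) := by
      linear_combination Real.log (alpha * beta * gamma) * hab
    have hc2' : a * Real.log (qmin * mumax) + b * Real.log (qmin * mumax) =
        Real.log (qmin * mumax) := by
      linear_combination Real.log (qmin * mumax) * hab
    linarith [h_logd, h_logm, h_logu, hc1, hc2']
end

section
/- (Proposition 3, part 1) Let (s,e,v,q,c) : [0,t_f] → ℝ⁵ solve the consortium model with controls α, d continuous at t_f, with s(t), e(t), v(t), c(t) ≥ 0 and q(t) ≥ q_min, and let λ = (λ_s, λ_e, λ_v, λ_q, λ_c) : [0,t_f] → ℝ⁵ solve the costate equations λ̇ = −∂H/∂x along this trajectory with terminal condition λ(t_f) = 0, for some λ_0 ∈ ℝ. Then the switching function ζ_α(t) = (β·λ_v(t) − λ_e(t))·φ(s(t))·e(t) satisfies ζ_α(t_f) = 0 and ζ_α is differentiable at t_f with derivative ζ̇_α(t_f) = 0. -/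
open MeasureTheory intervalIntegral

/-- `φ'(s) = φmax·ks/(ks+s)²`. -/
noncomputable def phi' (phimax ks s : ℝ) : ℝ := phimax * ks / (ks + s) ^ 2

/-- `ρ'(v) = ρmax·kv/(kv+v)²`. -/
noncomputable def rho' (rhomax kv v : ℝ) : ℝ := rhomax * kv / (kv + v) ^ 2

/-- `μ'(q) = μmax·qmin/q²`. -/
noncomputable def mu' (mumax qmin q : ℝ) : ℝ := mumax * qmin / q ^ 2

/-- If `A` has derivative `0` and vanishes at `x`, and `B` is continuous at `x` (within `S`),
then `A * B` has derivative `0` at `x` within `S`. -/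
lemma hasDerivWithinAt_mul_of_zero {A B : ℝ → ℝ} {S : Set ℝ} {x : ℝ}
    (hA : HasDerivWithinAt A 0 S x) (hA0 : A x = 0)
    (hB : ContinuousWithinAt B S x) :
    HasDerivWithinAt (fun t => A t * B t) 0 S x := by
  rw [hasDerivWithinAt_iff_tendsto_slope] at hA ⊢
  have hB' : Filter.Tendsto B (nhdsWithin x (S \ {x})) (nhds (B x)) :=
    hB.mono_left (nhdsWithin_mono x Set.diff_subset)
  have h := hA.mul hB'
  rw [zero_mul] at h
  refine h.congr fun t => ?_
  simp only [slope_def_field, hA0]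
  ring

/-- FTC at the right endpoint, integral-form version. -/
lemma ftc_endpoint {f : ℝ → ℝ} {a b : ℝ} (hab : a ≤ b)
    (hmeas : AEStronglyMeasurable f (volume.restrict (Set.Icc a b)))
    (hcont : ContinuousWithinAt f (Set.Icc a b) b) :
    HasDerivWithinAt (fun u => ∫ x in b..u, f x) (f b) (Set.Icc a b) b := by
  haveI : Fact (b ∈ Set.Icc a b) := ⟨⟨hab, le_refl b⟩⟩
  exact intervalIntegral.integral_hasDerivWithinAt_right (IntervalIntegrable.refl)
    ⟨Set.Icc a b, self_mem_nhdsWithin, hmeas⟩ hcont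

/-- (Proposition 3, part 1) Along a solution of the consortium model on `[0,t_f]` with controls
continuous at `t_f`, and a solution `λ = (λs,λe,λv,λq,λc)` of the costate equations
`λ̇ = −∂H/∂x` with terminal condition `λ(t_f) = 0` (encoded in integral form), the switching
function `ζ_α(t) = (β·λv(t) − λe(t))·φ(s(t))·e(t)` satisfies `ζ_α(t_f) = 0` and `ζ_α` is
differentiable at `t_f` with derivative `0`. -/
theorem zeta_alpha_final_time
    (phimax ks rhomax kv mumax qmin beta gamma sIn dmax tf lambda0 : ℝ)
    (hphimax : 0 < phimax) (hks : 0 < ks) (hrho : 0 < rhomax) (hkv : 0 < kv)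
    (hmu : 0 < mumax) (hqmin : 0 < qmin) (hbeta : 0 < beta) (hgamma : 0 < gamma)
    (hsIn : 0 < sIn) (hdmax : 0 < dmax) (htf : 0 < tf)
    (s e v q c alpha d ls le lv lq lc : ℝ → ℝ)
    (halpha_meas : Measurable alpha) (hd_meas : Measurable d)
    (halpha : ∀ t ∈ Set.Icc 0 tf, alpha t ∈ Set.Icc (0:ℝ) 1)
    (hd : ∀ t ∈ Set.Icc 0 tf, d t ∈ Set.Icc (0:ℝ) dmax)
    (halpha_tf : ContinuousWithinAt alpha (Set.Icc 0 tf) tf)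
    (hd_tf : ContinuousWithinAt d (Set.Icc 0 tf) tf)
    (hpos : ∀ t ∈ Set.Icc 0 tf, 0 ≤ s t ∧ 0 ≤ e t ∧ 0 ≤ v t ∧ qmin ≤ q t ∧ 0 ≤ c t)
    (hs_cont : ContinuousOn s (Set.Icc 0 tf)) (he_cont : ContinuousOn e (Set.Icc 0 tf))
    (hv_cont : ContinuousOn v (Set.Icc 0 tf)) (hq_cont : ContinuousOn q (Set.Icc 0 tf))
    (hc_cont : ContinuousOn c (Set.Icc 0 tf))
    (hls_cont : ContinuousOn ls (Set.Icc 0 tf)) (hle_cont : ContinuousOn le (Set.Icc 0 tf))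
    (hlv_cont : ContinuousOn lv (Set.Icc 0 tf)) (hlq_cont : ContinuousOn lq (Set.Icc 0 tf))
    (hlc_cont : ContinuousOn lc (Set.Icc 0 tf))
    (hsys : ∀ t ∈ Set.Icc 0 tf,
      (s t = s 0 + ∫ τ in (0:ℝ)..t,
        (-(1/gamma) * phi phimax ks (s τ) * e τ + d τ * (sIn - s τ))) ∧
      (e t = e 0 + ∫ τ in (0:ℝ)..t,
        ((1 - alpha τ) * phi phimax ks (s τ) * e τ - d τ * e τ)) ∧
      (v t = v 0 + ∫ τ in (0:ℝ)..t,
        (alpha τ * beta * phi phimax ks (s τ) * e τ - rho rhomax kv (v τ) * c τ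
          - d τ * v τ)) ∧
      (q t = q 0 + ∫ τ in (0:ℝ)..t,
        (rho rhomax kv (v τ) - mufun mumax qmin (q τ) * q τ)) ∧
      (c t = c 0 + ∫ τ in (0:ℝ)..t,
        ((mufun mumax qmin (q τ) - d τ) * c τ)))
    (hcostate : ∀ t ∈ Set.Icc 0 tf,
      (ls t = ∫ τ in tf..t,
        (ls τ * ((1/gamma) * phi' phimax ks (s τ) * e τ + d τ)
          - le τ * ((1 - alpha τ) * phi' phimax ks (s τ) * e τ)
          - lv τ * (alpha τ * beta * phi' phimax ks (s τ) * e τ))) ∧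
      (le t = ∫ τ in tf..t,
        (ls τ * ((1/gamma) * phi phimax ks (s τ))
          - le τ * ((1 - alpha τ) * phi phimax ks (s τ) - d τ)
          - lv τ * (alpha τ * beta * phi phimax ks (s τ)))) ∧
      (lv t = ∫ τ in tf..t,
        (lv τ * (rho' rhomax kv (v τ) * c τ + d τ) - lq τ * rho' rhomax kv (v τ))) ∧
      (lq t = ∫ τ in tf..t,
        (lq τ * mumax - lc τ * mu' mumax qmin (q τ) * c τ)) ∧
      (lc t = ∫ τ in tf..t,
        (-lambda0 * d τ + lv τ * rho rhomax kv (v τ)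
          - lc τ * (mufun mumax qmin (q τ) - d τ)))) :
    (beta * lv tf - le tf) * phi phimax ks (s tf) * e tf = 0 ∧
    HasDerivWithinAt (fun t => (beta * lv t - le t) * phi phimax ks (s t) * e t)
      0 (Set.Icc 0 tf) tf := by
  have hmem : tf ∈ Set.Icc (0:ℝ) tf := ⟨htf.le, le_rfl⟩
  -- all costates vanish at the final time
  have hls0 : ls tf = 0 := by
    simpa [intervalIntegral.integral_same] using (hcostate tf hmem).1
  have hle0 : le tf = 0 := by
    simpa [intervalIntegral.integral_same] using (hcostate tf hmem).2.1
  have hlv0 : lv tf = 0 := by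
    simpa [intervalIntegral.integral_same] using (hcostate tf hmem).2.2.1
  have hlq0 : lq tf = 0 := by
    simpa [intervalIntegral.integral_same] using (hcostate tf hmem).2.2.2.1
  -- continuity of φ ∘ s on the interval
  have hphis : ContinuousOn (fun τ => phi phimax ks (s τ)) (Set.Icc 0 tf) := by
    intro τ hτ
    have hden : ks + s τ ≠ 0 := by have := (hpos τ hτ).1; nlinarith
    exact (continuousWithinAt_const.mul (hs_cont τ hτ)).div
      (continuousWithinAt_const.add (hs_cont τ hτ)) hden
  -- continuity of ρ' ∘ v on the interval
  have hrhov : ContinuousOn (fun τ => rho' rhomax kv (v τ)) (Set.Icc 0 tf) := by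
    intro τ hτ
    have hden : (kv + v τ) ^ 2 ≠ 0 := by have := (hpos τ hτ).2.2.1; positivity
    exact continuousWithinAt_const.div
      ((continuousWithinAt_const.add (hv_cont τ hτ)).pow 2) hden
  -- the integrand for λ_e
  set ge : ℝ → ℝ := fun τ =>
    ls τ * ((1/gamma) * phi phimax ks (s τ))
      - le τ * ((1 - alpha τ) * phi phimax ks (s τ) - d τ)
      - lv τ * (alpha τ * beta * phi phimax ks (s τ)) with hge
  -- the integrand for λ_v
  set gv : ℝ → ℝ := fun τ =>
    lv τ * (rho' rhomax kv (v τ) * c τ + d τ) - lq τ * rho' rhomax kv (v τ) with hgv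
  have hge_meas : AEStronglyMeasurable ge (volume.restrict (Set.Icc 0 tf)) := by
    refine (((hls_cont.aestronglyMeasurable measurableSet_Icc).mul
        ((aestronglyMeasurable_const).mul
          (hphis.aestronglyMeasurable measurableSet_Icc))).sub
      ((hle_cont.aestronglyMeasurable measurableSet_Icc).mul
        ((((aestronglyMeasurable_const).sub
            halpha_meas.aestronglyMeasurable.restrict).mul
          (hphis.aestronglyMeasurable measurableSet_Icc)).sub
          hd_meas.aestronglyMeasurable.restrict))).sub
      ((hlv_cont.aestronglyMeasurable measurableSet_Icc).mul
        (((halpha_meas.aestronglyMeasurable.restrict).mul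
          aestronglyMeasurable_const).mul
          (hphis.aestronglyMeasurable measurableSet_Icc)))
  have hgv_meas : AEStronglyMeasurable gv (volume.restrict (Set.Icc 0 tf)) := by
    refine ((hlv_cont.aestronglyMeasurable measurableSet_Icc).mul
        (((hrhov.aestronglyMeasurable measurableSet_Icc).mul
          (hc_cont.aestronglyMeasurable measurableSet_Icc)).add
          hd_meas.aestronglyMeasurable.restrict)).sub
      ((hlq_cont.aestronglyMeasurable measurableSet_Icc).mul
        (hrhov.aestronglyMeasurable measurableSet_Icc))
  have hge_cont : ContinuousWithinAt ge (Set.Icc 0 tf) tf := by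
    refine (((hls_cont tf hmem).mul
        (continuousWithinAt_const.mul (hphis tf hmem))).sub
      ((hle_cont tf hmem).mul
        (((continuousWithinAt_const.sub halpha_tf).mul (hphis tf hmem)).sub hd_tf))).sub
      ((hlv_cont tf hmem).mul
        ((halpha_tf.mul continuousWithinAt_const).mul (hphis tf hmem)))
  have hgv_cont : ContinuousWithinAt gv (Set.Icc 0 tf) tf := by
    refine ((hlv_cont tf hmem).mul
        (((hrhov tf hmem).mul (hc_cont tf hmem)).add hd_tf)).sub
      ((hlq_cont tf hmem).mul (hrhov tf hmem))
  -- derivatives of λ_e and λ_v at tf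
  have hle' : HasDerivWithinAt le 0 (Set.Icc 0 tf) tf := by
    have h := (ftc_endpoint htf.le hge_meas hge_cont).congr
      (fun y hy => (hcostate y hy).2.1) ((hcostate tf hmem).2.1)
    have h0 : ge tf = 0 := by simp only [hge, hls0, hle0, hlv0]; ring
    rw [h0] at h
    exact h
  have hlv' : HasDerivWithinAt lv 0 (Set.Icc 0 tf) tf := by
    have h := (ftc_endpoint htf.le hgv_meas hgv_cont).congr
      (fun y hy => (hcostate y hy).2.2.1) ((hcostate tf hmem).2.2.1)
    have h0 : gv tf = 0 := by simp only [hgv, hlv0, hlq0]; ring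
    rw [h0] at h
    exact h
  -- A := β λ_v − λ_e
  have hA : HasDerivWithinAt (fun t => beta * lv t - le t) 0 (Set.Icc 0 tf) tf := by
    have h := (hlv'.const_mul beta).sub hle'
    rw [mul_zero, sub_zero] at h
    exact h
  have hA0 : beta * lv tf - le tf = 0 := by rw [hlv0, hle0]; ring
  have hB : ContinuousWithinAt (fun t => phi phimax ks (s t) * e t) (Set.Icc 0 tf) tf :=
    (hphis tf hmem).mul (he_cont tf hmem)
  constructor
  · rw [hA0]; ring
  · have h := hasDerivWithinAt_mul_of_zero hA hA0 hB
    exact h.congr (fun y _ => by ring) (by ring)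
end

section
/- (Proposition 3, part 2) Let (s,e,v,q,c) : [0,t_f] → ℝ⁵ solve the consortium model with measurable controls, with s(t), e(t), v(t), c(t) ≥ 0 and q(t) ≥ q_min, and let λ = (λ_s, λ_e, λ_v, λ_q, λ_c) : [0,t_f] → ℝ⁵ solve the costate equations λ̇ = −∂H/∂x along this trajectory with terminal condition λ(t_f) = 0, for some λ_0 > 0. Then the switching function ζ_d(t) = λ_s(t)(s_in − s(t)) − λ_e(t)e(t) − λ_v(t)v(t) + (λ_0 − λ_c(t))c(t) satisfies ζ_d(t_f) = λ_0·c(t_f); moreover, if c(0) > 0 then ζ_d(t_f) > 0 and there exists ε > 0 such that ζ_d(t) > 0 for all t ∈ [t_f − ε, t_f]. -/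
open MeasureTheory intervalIntegral

/-- (Proposition 3, part 2) Along a solution of the consortium model on `[0,t_f]` with
measurable controls, and a solution `λ` of the costate equations `λ̇ = −∂H/∂x` with terminal
condition `λ(t_f) = 0` (encoded in integral form), for `λ_0 > 0` the switching function
`ζ_d(t) = λs(t)(s_in − s(t)) − λe(t)e(t) − λv(t)v(t) + (λ_0 − λc(t))c(t)` satisfies
`ζ_d(t_f) = λ_0·c(t_f)`; moreover, if `c(0) > 0` then `ζ_d(t_f) > 0` and there exists
`ε > 0` such that `ζ_d(t) > 0` for all `t ∈ [t_f − ε, t_f]`. -/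
theorem zeta_d_final_time
    (phimax ks rhomax kv mumax qmin beta gamma sIn dmax tf lambda0 : ℝ)
    (hphimax : 0 < phimax) (hks : 0 < ks) (hrho : 0 < rhomax) (hkv : 0 < kv)
    (hmu : 0 < mumax) (hqmin : 0 < qmin) (hbeta : 0 < beta) (hgamma : 0 < gamma)
    (hsIn : 0 < sIn) (hdmax : 0 < dmax) (htf : 0 < tf) (hlambda0 : 0 < lambda0)
    (s e v q c alpha d ls le lv lq lc : ℝ → ℝ)
    (halpha_meas : Measurable alpha) (hd_meas : Measurable d)
    (halpha : ∀ t ∈ Set.Icc 0 tf, alpha t ∈ Set.Icc (0:ℝ) 1)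
    (hd : ∀ t ∈ Set.Icc 0 tf, d t ∈ Set.Icc (0:ℝ) dmax)
    (hpos : ∀ t ∈ Set.Icc 0 tf, 0 ≤ s t ∧ 0 ≤ e t ∧ 0 ≤ v t ∧ qmin ≤ q t ∧ 0 ≤ c t)
    (hs_cont : ContinuousOn s (Set.Icc 0 tf)) (he_cont : ContinuousOn e (Set.Icc 0 tf))
    (hv_cont : ContinuousOn v (Set.Icc 0 tf)) (hq_cont : ContinuousOn q (Set.Icc 0 tf))
    (hc_cont : ContinuousOn c (Set.Icc 0 tf))
    (hls_cont : ContinuousOn ls (Set.Icc 0 tf)) (hle_cont : ContinuousOn le (Set.Icc 0 tf))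
    (hlv_cont : ContinuousOn lv (Set.Icc 0 tf)) (hlq_cont : ContinuousOn lq (Set.Icc 0 tf))
    (hlc_cont : ContinuousOn lc (Set.Icc 0 tf))
    (hsys : ∀ t ∈ Set.Icc 0 tf,
      (s t = s 0 + ∫ τ in (0:ℝ)..t,
        (-(1/gamma) * phi phimax ks (s τ) * e τ + d τ * (sIn - s τ))) ∧
      (e t = e 0 + ∫ τ in (0:ℝ)..t,
        ((1 - alpha τ) * phi phimax ks (s τ) * e τ - d τ * e τ)) ∧
      (v t = v 0 + ∫ τ in (0:ℝ)..t,
        (alpha τ * beta * phi phimax ks (s τ) * e τ - rho rhomax kv (v τ) * c τ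
          - d τ * v τ)) ∧
      (q t = q 0 + ∫ τ in (0:ℝ)..t,
        (rho rhomax kv (v τ) - mufun mumax qmin (q τ) * q τ)) ∧
      (c t = c 0 + ∫ τ in (0:ℝ)..t,
        ((mufun mumax qmin (q τ) - d τ) * c τ)))
    (hcostate : ∀ t ∈ Set.Icc 0 tf,
      (ls t = ∫ τ in tf..t,
        (ls τ * ((1/gamma) * phi' phimax ks (s τ) * e τ + d τ)
          - le τ * ((1 - alpha τ) * phi' phimax ks (s τ) * e τ)
          - lv τ * (alpha τ * beta * phi' phimax ks (s τ) * e τ))) ∧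
      (le t = ∫ τ in tf..t,
        (ls τ * ((1/gamma) * phi phimax ks (s τ))
          - le τ * ((1 - alpha τ) * phi phimax ks (s τ) - d τ)
          - lv τ * (alpha τ * beta * phi phimax ks (s τ)))) ∧
      (lv t = ∫ τ in tf..t,
        (lv τ * (rho' rhomax kv (v τ) * c τ + d τ) - lq τ * rho' rhomax kv (v τ))) ∧
      (lq t = ∫ τ in tf..t,
        (lq τ * mumax - lc τ * mu' mumax qmin (q τ) * c τ)) ∧
      (lc t = ∫ τ in tf..t,
        (-lambda0 * d τ + lv τ * rho rhomax kv (v τ)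
          - lc τ * (mufun mumax qmin (q τ) - d τ)))) :
    ls tf * (sIn - s tf) - le tf * e tf - lv tf * v tf + (lambda0 - lc tf) * c tf
      = lambda0 * c tf ∧
    (0 < c 0 →
      (0 < ls tf * (sIn - s tf) - le tf * e tf - lv tf * v tf
            + (lambda0 - lc tf) * c tf) ∧
      ∃ ε > 0, ∀ t ∈ Set.Icc (tf - ε) tf,
        0 < ls t * (sIn - s t) - le t * e t - lv t * v t + (lambda0 - lc t) * c t) := by
  classical
  have htf_mem : tf ∈ Set.Icc (0:ℝ) tf := ⟨htf.le, _root_.le_refl tf⟩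
  obtain ⟨hls0, hle0, hlv0, hlq0, hlc0⟩ := hcostate tf htf_mem
  simp only [intervalIntegral.integral_same] at hls0 hle0 hlv0 hlq0 hlc0
  have hzeta_tf : ls tf * (sIn - s tf) - le tf * e tf - lv tf * v tf
      + (lambda0 - lc tf) * c tf = lambda0 * c tf := by
    rw [hls0, hle0, hlv0, hlc0]; ring
  refine ⟨hzeta_tf, fun hc0 => ?_⟩
  -- basic facts
  have hq_pos : ∀ τ ∈ Set.Icc (0:ℝ) tf, 0 < q τ :=
    fun τ hτ => lt_of_lt_of_le hqmin (hpos τ hτ).2.2.2.1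
  have hmu_bound : ∀ τ ∈ Set.Icc (0:ℝ) tf,
      0 ≤ mufun mumax qmin (q τ) ∧ mufun mumax qmin (q τ) ≤ mumax := by
    intro τ hτ
    have hq := hq_pos τ hτ
    have h1 : qmin / q τ ≤ 1 := (div_le_one hq).2 ((hpos τ hτ).2.2.2.1)
    have h2 : 0 ≤ qmin / q τ := div_nonneg hqmin.le hq.le
    refine ⟨mul_nonneg hmu.le (by linarith), ?_⟩
    unfold mufun; nlinarith
  have hc_meas : AEStronglyMeasurable c (volume.restrict (Set.Icc (0:ℝ) tf)) :=
    hc_cont.aestronglyMeasurable measurableSet_Icc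
  have hmu_cont : ContinuousOn (fun τ => mufun mumax qmin (q τ)) (Set.Icc (0:ℝ) tf) := by
    unfold mufun
    exact continuousOn_const.mul (continuousOn_const.sub
      (continuousOn_const.div hq_cont (fun τ hτ => (hq_pos τ hτ).ne')))
  obtain ⟨C, hC⟩ := isCompact_Icc.exists_bound_of_continuousOn hc_cont
  set fd : ℝ → ℝ := fun τ => (mufun mumax qmin (q τ) - d τ) * c τ with hfd_def
  have hfd_int : MeasureTheory.IntegrableOn fd (Set.Icc (0:ℝ) tf) := by
    refine ⟨((hmu_cont.aestronglyMeasurable measurableSet_Icc).sub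
      hd_meas.aestronglyMeasurable.restrict).mul hc_meas, ?_⟩
    apply MeasureTheory.HasFiniteIntegral.restrict_of_bounded
      (C := (mumax + dmax) * C) measure_Icc_lt_top
    filter_upwards [MeasureTheory.ae_restrict_mem measurableSet_Icc] with τ hτ
    have hmb := hmu_bound τ hτ
    have hd' := hd τ hτ
    have hcC := hC τ hτ
    simp only [Real.norm_eq_abs] at hcC ⊢
    rw [abs_mul]
    have h1 : |mufun mumax qmin (q τ) - d τ| ≤ mumax + dmax := by
      rw [abs_le]
      rcases hd' with ⟨hd1, hd2⟩; rcases hmb with ⟨hm1, hm2⟩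
      constructor <;> linarith
    nlinarith [abs_nonneg (c τ), abs_nonneg (mufun mumax qmin (q τ) - d τ)]
  have hfd_ii : ∀ a b : ℝ, a ∈ Set.Icc (0:ℝ) tf → b ∈ Set.Icc (0:ℝ) tf →
      IntervalIntegrable fd volume a b := by
    intro a b ha hb
    rw [intervalIntegrable_iff]
    exact hfd_int.mono_set
      (subset_trans Set.uIoc_subset_uIcc (Set.uIcc_subset_Icc ha hb))
  have hc_int : MeasureTheory.IntegrableOn c (Set.Icc (0:ℝ) tf) :=
    hc_cont.integrableOn_compact isCompact_Icc
  have hc_ii : ∀ a b : ℝ, a ∈ Set.Icc (0:ℝ) tf → b ∈ Set.Icc (0:ℝ) tf →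
      IntervalIntegrable c volume a b := by
    intro a b ha hb
    rw [intervalIntegrable_iff]
    exact hc_int.mono_set
      (subset_trans Set.uIoc_subset_uIcc (Set.uIcc_subset_Icc ha hb))
  have hzero_mem : (0:ℝ) ∈ Set.Icc (0:ℝ) tf := ⟨_root_.le_refl 0, htf.le⟩
  -- c tf > 0
  have hctf : 0 < c tf := by
    rcases ((hpos tf htf_mem).2.2.2.2).lt_or_eq with h | h
    · exact h
    exfalso
    -- key: c t = - ∫ t..tf fd
    have hkey : ∀ t ∈ Set.Icc (0:ℝ) tf, c t = -∫ τ in t..tf, fd τ := by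
      intro t ht
      have h1 := (hsys t ht).2.2.2.2
      have h2 := (hsys tf htf_mem).2.2.2.2
      have hadd := intervalIntegral.integral_add_adjacent_intervals
        (hfd_ii 0 t hzero_mem ht) (hfd_ii t tf ht htf_mem)
      rw [← h] at h2
      simp only [hfd_def] at h1 h2 hadd
      linarith
    set Φ : ℝ → ℝ := fun t => ∫ τ in (0:ℝ)..t, c τ with hΦ_def
    set ψ : ℝ → ℝ := fun t => ∫ τ in t..tf, c τ with hψ_def
    have hψΦ : ∀ t ∈ Set.Icc (0:ℝ) tf, ψ t = Φ tf - Φ t := by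
      intro t ht
      have hadd := intervalIntegral.integral_add_adjacent_intervals
        (hc_ii 0 t hzero_mem ht) (hc_ii t tf ht htf_mem)
      simp only [hψ_def, hΦ_def]
      linarith
    have hψ_nonneg : ∀ t ∈ Set.Icc (0:ℝ) tf, 0 ≤ ψ t := by
      intro t ht
      exact intervalIntegral.integral_nonneg ht.2
        (fun τ hτ => (hpos τ ⟨_root_.le_trans ht.1 hτ.1, hτ.2⟩).2.2.2.2)
    have hkey2 : ∀ t ∈ Set.Icc (0:ℝ) tf, c t ≤ dmax * ψ t := by
      intro t ht
      rw [hkey t ht, ← intervalIntegral.integral_neg]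
      have hmono : ∫ τ in t..tf, -fd τ ≤ ∫ τ in t..tf, dmax * c τ := by
        apply intervalIntegral.integral_mono_on ht.2 (hfd_ii t tf ht htf_mem).neg
          ((hc_ii t tf ht htf_mem).const_mul dmax)
        intro τ hτ
        have hτ' : τ ∈ Set.Icc (0:ℝ) tf := ⟨_root_.le_trans ht.1 hτ.1, hτ.2⟩
        have hmb := hmu_bound τ hτ'
        have hd' := hd τ hτ'
        have hcnn := (hpos τ hτ').2.2.2.2
        simp only [hfd_def, Pi.neg_apply]
        have hprod : 0 ≤ (dmax - d τ + mufun mumax qmin (q τ)) * c τ :=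
          mul_nonneg (by linarith [hd'.2, hmb.1]) hcnn
        nlinarith [hprod]
      calc ∫ τ in t..tf, -fd τ ≤ ∫ τ in t..tf, dmax * c τ := hmono
        _ = dmax * ψ t := by rw [intervalIntegral.integral_const_mul]
    -- the primitive Φ is continuous on [0,tf] and differentiable inside
    have hIcc_eq : Set.uIcc (0:ℝ) tf = Set.Icc (0:ℝ) tf := Set.uIcc_of_le htf.le
    have hΦ_cont : ContinuousOn Φ (Set.Icc (0:ℝ) tf) := by
      have := intervalIntegral.continuousOn_primitive_interval
        (a := (0:ℝ)) (b := tf) (μ := volume) (f := c) (by rwa [hIcc_eq])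
      rwa [hIcc_eq] at this
    have hΦ_deriv : ∀ x ∈ Set.Ioo (0:ℝ) tf, HasDerivAt Φ (c x) x := by
      intro x hx
      have hnb : Set.Icc (0:ℝ) tf ∈ nhds x := Icc_mem_nhds hx.1 hx.2
      have hca : ContinuousAt c x := hc_cont.continuousAt hnb
      exact intervalIntegral.integral_hasDerivAt_right
        (hc_ii 0 x hzero_mem ⟨hx.1.le, hx.2.le⟩) ⟨Set.Icc (0:ℝ) tf, hnb, hc_meas⟩ hca
    set g : ℝ → ℝ := fun t => (Φ tf - Φ t) * Real.exp (dmax * t) with hg_def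
    have hg_deriv : ∀ x ∈ Set.Ioo (0:ℝ) tf, HasDerivAt g
        ((-(c x)) * Real.exp (dmax * x) + (Φ tf - Φ x) * (dmax * Real.exp (dmax * x))) x := by
      intro x hx
      have h1 : HasDerivAt (fun t => Φ tf - Φ t) (-(c x)) x := by
        exact (hΦ_deriv x hx).const_sub (Φ tf)
      have h2 : HasDerivAt (fun t => Real.exp (dmax * t)) (dmax * Real.exp (dmax * x)) x := by
        have := (Real.hasDerivAt_exp (dmax * x)).comp x
          ((hasDerivAt_id x).const_mul dmax)
        simpa [mul_comm, Function.comp_def] using this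
      exact h1.mul h2
    have hg_mono : MonotoneOn g (Set.Icc (0:ℝ) tf) := by
      apply monotoneOn_of_deriv_nonneg (convex_Icc 0 tf)
      · exact (continuousOn_const.sub hΦ_cont).mul
          (Real.continuous_exp.comp (continuous_const.mul continuous_id)).continuousOn
      · rw [interior_Icc]
        exact fun x hx => (hg_deriv x hx).differentiableAt.differentiableWithinAt
      · rw [interior_Icc]
        intro x hx
        rw [(hg_deriv x hx).deriv]
        have hx' : x ∈ Set.Icc (0:ℝ) tf := ⟨hx.1.le, hx.2.le⟩
        have h1 := hkey2 x hx'
        have h2 := hψΦ x hx'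
        have h3 := Real.exp_pos (dmax * x)
        have h4 : c x ≤ dmax * (Φ tf - Φ x) := by rw [← h2]; exact h1
        nlinarith [mul_le_mul_of_nonneg_right h4 h3.le]
    have hgtf : g tf = 0 := by simp [hg_def]
    have hg0 : g 0 ≤ 0 := by
      have := hg_mono hzero_mem htf_mem htf.le
      rwa [hgtf] at this
    have hψ0 : ψ 0 ≤ 0 := by
      have hg0' : g 0 = ψ 0 := by
        simp [hg_def, hψΦ 0 hzero_mem]
      linarith [hg0, hg0'.symm.le, hg0'.le]
    have hc0' : c 0 ≤ dmax * ψ 0 := hkey2 0 hzero_mem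
    have hψ00 : ψ 0 = 0 := _root_.le_antisymm hψ0 (hψ_nonneg 0 hzero_mem)
    rw [hψ00, mul_zero] at hc0'
    linarith
  -- conclusion
  have hζpos : 0 < ls tf * (sIn - s tf) - le tf * e tf - lv tf * v tf
      + (lambda0 - lc tf) * c tf := by
    rw [hzeta_tf]; positivity
  refine ⟨hζpos, ?_⟩
  -- continuity of the switching function near tf
  set ζ : ℝ → ℝ := fun t => ls t * (sIn - s t) - le t * e t - lv t * v t
      + (lambda0 - lc t) * c t with hζ_def
  have hζ_cont : ContinuousOn ζ (Set.Icc (0:ℝ) tf) := by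
    apply ContinuousOn.add
    · exact ((hls_cont.mul (continuousOn_const.sub hs_cont)).sub
        (hle_cont.mul he_cont)).sub (hlv_cont.mul hv_cont)
    · exact (continuousOn_const.sub hlc_cont).mul hc_cont
  have hev : ∀ᶠ t in nhdsWithin tf (Set.Icc (0:ℝ) tf), 0 < ζ t :=
    (hζ_cont tf htf_mem).eventually (eventually_gt_nhds hζpos)
  rw [Filter.eventually_iff, Metric.mem_nhdsWithin_iff] at hev
  obtain ⟨δ, hδ, hball⟩ := hev
  refine ⟨min (δ/2) tf, lt_min (by linarith) htf, ?_⟩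
  intro t ht
  have ht1 : t ∈ Set.Icc (0:ℝ) tf := by
    constructor
    · have := ht.1
      have : tf - min (δ/2) tf ≤ t := ht.1
      have hm : min (δ/2) tf ≤ tf := min_le_right _ _
      linarith
    · exact ht.2
  have hdist : dist t tf < δ := by
    rw [Real.dist_eq, abs_lt]
    have hm : min (δ/2) tf ≤ δ/2 := min_le_left _ _
    constructor
    · have := ht.1; linarith
    · have := ht.2; linarith
  exact hball ⟨Metric.mem_ball.2 hdist, ht1⟩
end

section
/- Every absolutely continuous solution (s,e,v,q,c) : [0,∞) → ℝ⁵ of the consortium model with measurable controls α(t) ∈ [0,1], d(t) ∈ [0, d_max] and initial condition satisfying s(0) ≥ 0, e(0) ≥ 0, v(0) ≥ 0, q(0) ≥ q_min, c(0) ≥ 0 remains in the region {s ≥ 0, e ≥ 0, v ≥ 0, q ≥ q_min, c ≥ 0} for all t ≥ 0, and all five components s, e, v, q, c are bounded on [0,∞). -/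
open MeasureTheory intervalIntegral

section ConsortiumAux

open Set Filter Topology

/-- integrability of (continuousOn) * (bounded measurable) on [0,T] -/
lemma consortium_II_of_bdd_meas {f g : ℝ → ℝ} {T C : ℝ} (hT : 0 ≤ T)
    (hf : ContinuousOn f (Set.Icc 0 T)) (hg : Measurable g)
    (hC : ∀ τ ∈ Set.Icc 0 T, |g τ| ≤ C) :
    IntervalIntegrable (fun τ => f τ * g τ) volume 0 T := by
  obtain ⟨B, hB⟩ := isCompact_Icc.exists_bound_of_continuousOn hf
  rw [intervalIntegrable_iff_integrableOn_Ioc_of_le hT]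
  have hmeas : AEStronglyMeasurable (fun τ => f τ * g τ)
      (volume.restrict (Set.Ioc (0:ℝ) T)) :=
    ((hf.mono Set.Ioc_subset_Icc_self).aestronglyMeasurable measurableSet_Ioc).mul
      hg.aestronglyMeasurable.restrict
  refine Integrable.mono' (integrable_const (B * C)) hmeas ?_
  refine (ae_restrict_iff' measurableSet_Ioc).2 (ae_of_all _ fun τ hτ => ?_)
  have hτ' : τ ∈ Set.Icc (0:ℝ) T := Set.Ioc_subset_Icc_self hτ
  have h1 := hB τ hτ'
  have h2 := hC τ hτ'
  have h0 : (0:ℝ) ≤ B := le_trans (norm_nonneg _) h1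
  calc ‖f τ * g τ‖ = ‖f τ‖ * |g τ| := by rw [norm_mul]; rfl
    _ ≤ B * C := mul_le_mul h1 h2 (abs_nonneg _) h0

/-- integrability of (continuousOn) * (interval integrable) on [0,T] -/
lemma consortium_II_mul_cont {f g : ℝ → ℝ} {T : ℝ} (hT : 0 ≤ T)
    (hf : ContinuousOn f (Set.Icc 0 T))
    (hg : IntervalIntegrable g volume 0 T) :
    IntervalIntegrable (fun τ => f τ * g τ) volume 0 T := by
  obtain ⟨B, hB⟩ := isCompact_Icc.exists_bound_of_continuousOn hf
  rw [intervalIntegrable_iff_integrableOn_Ioc_of_le hT] at hg ⊢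
  have hmeas : AEStronglyMeasurable (fun τ => f τ * g τ)
      (volume.restrict (Set.Ioc (0:ℝ) T)) :=
    ((hf.mono Set.Ioc_subset_Icc_self).aestronglyMeasurable measurableSet_Ioc).mul
      hg.aestronglyMeasurable
  refine Integrable.mono' (hg.abs.const_mul B) hmeas ?_
  refine (ae_restrict_iff' measurableSet_Ioc).2 (ae_of_all _ fun τ hτ => ?_)
  have h1 := hB τ (Set.Ioc_subset_Icc_self hτ)
  calc ‖f τ * g τ‖ = ‖f τ‖ * |g τ| := by rw [norm_mul]; rfl
    _ ≤ B * |g τ| := mul_le_mul_of_nonneg_right h1 (abs_nonneg _)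

/-- Gronwall: nonnegative continuous function dominated by K∫y is zero. -/
lemma consortium_gronwall_zero {y : ℝ → ℝ} {T K : ℝ} (hT : 0 ≤ T) (hK : 0 ≤ K)
    (hy : ContinuousOn y (Set.Icc 0 T))
    (hpos : ∀ t ∈ Set.Icc 0 T, 0 ≤ y t)
    (hle : ∀ t ∈ Set.Icc 0 T, y t ≤ K * ∫ τ in (0:ℝ)..t, y τ) :
    ∀ t ∈ Set.Icc 0 T, y t = 0 := by
  obtain ⟨C, hC⟩ := isCompact_Icc.exists_bound_of_continuousOn hy
  have key : ∀ n : ℕ, ∀ t ∈ Set.Icc (0:ℝ) T,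
      y t ≤ C * (K * t) ^ n / (n.factorial : ℝ) := by
    intro n
    induction n with
    | zero =>
      intro t ht
      simpa using le_of_abs_le (hC t ht)
    | succ n ih =>
      intro t ht
      have ht0 : (0:ℝ) ≤ t := ht.1
      have hsub : Set.Icc (0:ℝ) t ⊆ Set.Icc (0:ℝ) T :=
        Set.Icc_subset_Icc le_rfl ht.2
      have hyint : IntervalIntegrable y volume 0 t := by
        apply ContinuousOn.intervalIntegrable
        rw [Set.uIcc_of_le ht0]
        exact hy.mono hsub
      have hfac : ((n.factorial : ℝ)) ≠ 0 := Nat.cast_ne_zero.2 n.factorial_ne_zero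
      have hpoly : IntervalIntegrable
          (fun τ => C * K ^ n / (n.factorial : ℝ) * τ ^ n) volume 0 t :=
        Continuous.intervalIntegrable (by continuity) 0 t
      have hmono : (∫ τ in (0:ℝ)..t, y τ)
          ≤ ∫ τ in (0:ℝ)..t, (C * K ^ n / (n.factorial : ℝ) * τ ^ n) := by
        refine intervalIntegral.integral_mono_on ht0 hyint hpoly (fun τ hτ => ?_)
        calc y τ ≤ C * (K * τ) ^ n / (n.factorial : ℝ) := ih τ (hsub hτ)
          _ = C * K ^ n / (n.factorial : ℝ) * τ ^ n := by rw [mul_pow]; ring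
      calc y t ≤ K * ∫ τ in (0:ℝ)..t, y τ := hle t ht
        _ ≤ K * ∫ τ in (0:ℝ)..t, (C * K ^ n / (n.factorial : ℝ) * τ ^ n) :=
            mul_le_mul_of_nonneg_left hmono hK
        _ = C * (K * t) ^ (n + 1) / ((n+1).factorial : ℝ) := by
            rw [intervalIntegral.integral_const_mul, integral_pow]
            rw [Nat.factorial_succ]
            push_cast
            field_simp
            ring
  intro t ht
  refine le_antisymm ?_ (hpos t ht)
  have htend : Tendsto (fun n : ℕ => C * (K * t) ^ n / (n.factorial : ℝ))
      atTop (𝓝 0) := by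
    have h := (FloorSemiring.tendsto_pow_div_factorial_atTop (K * t)).const_mul C
    simpa [mul_div_assoc] using h
  exact ge_of_tendsto htend (Filter.Eventually.of_forall fun n => key n t ht)

/-- Sign preservation for linear-type lower bounds. -/
lemma consortium_nonneg_of_linear_lower {x g : ℝ → ℝ} {T K : ℝ} (hT : 0 ≤ T) (hK : 0 ≤ K)
    (hx : ContinuousOn x (Set.Icc 0 T))
    (hg : IntervalIntegrable g volume 0 T)
    (heq : ∀ t ∈ Set.Icc (0:ℝ) T, x t = x 0 + ∫ τ in (0:ℝ)..t, g τ)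
    (hb : ∀ τ ∈ Set.Icc (0:ℝ) T, x τ ≤ 0 → K * x τ ≤ g τ)
    (hx0 : 0 ≤ x 0) : ∀ t ∈ Set.Icc (0:ℝ) T, 0 ≤ x t := by
  set y : ℝ → ℝ := fun t => max (-x t) 0 with hy_def
  have hy_cont : ContinuousOn y (Set.Icc 0 T) := (hx.neg).sup continuousOn_const
  have hy_pos : ∀ t ∈ Set.Icc (0:ℝ) T, 0 ≤ y t := fun t _ => le_max_right _ _
  have hy_le : ∀ t ∈ Set.Icc (0:ℝ) T, y t ≤ K * ∫ τ in (0:ℝ)..t, y τ := by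
    intro t ht
    have ht0 : (0:ℝ) ≤ t := ht.1
    have hsub : Set.Icc (0:ℝ) t ⊆ Set.Icc (0:ℝ) T := Set.Icc_subset_Icc le_rfl ht.2
    have hyint : IntervalIntegrable y volume 0 t := by
      apply ContinuousOn.intervalIntegrable
      rw [Set.uIcc_of_le ht0]; exact hy_cont.mono hsub
    have hynn : 0 ≤ ∫ τ in (0:ℝ)..t, y τ :=
      intervalIntegral.integral_nonneg ht0 (fun τ _ => le_max_right _ _)
    rcases le_or_gt 0 (x t) with hxt | hxt
    · have hyt : y t = 0 := max_eq_right (neg_nonpos.2 hxt)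
      rw [hyt]; exact mul_nonneg hK hynn
    · set S : Set ℝ := Set.Icc 0 t ∩ x ⁻¹' Set.Ici 0 with hS_def
      have hS_closed : IsClosed S :=
        (hx.mono hsub).preimage_isClosed_of_isClosed isClosed_Icc isClosed_Ici
      have hS_ne : S.Nonempty := ⟨0, ⟨le_rfl, ht0⟩, hx0⟩
      have hS_comp : IsCompact S :=
        isCompact_Icc.of_isClosed_subset hS_closed Set.inter_subset_left
      set r := sSup S with hr_def
      have hrS : r ∈ S := hS_comp.sSup_mem hS_ne
      have hr_mem : r ∈ Set.Icc (0:ℝ) t := hrS.1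
      have hxr0 : (0:ℝ) ≤ x r := hrS.2
      have hbdd : BddAbove S := hS_comp.bddAbove
      have hneg : ∀ σ ∈ Set.Ioc r t, x σ < 0 := by
        intro σ hσ
        by_contra h
        push_neg at h
        have hmem : σ ∈ S := ⟨⟨le_trans hr_mem.1 hσ.1.le, hσ.2⟩, h⟩
        exact absurd (le_csSup hbdd hmem) (not_le.2 hσ.1)
      have hrt : r < t := by
        rcases lt_or_eq_of_le hr_mem.2 with h | h
        · exact h
        · exact absurd (h ▸ hxr0) (not_le.2 hxt)
      have hxr_le : x r ≤ 0 := by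
        have hcw : Tendsto x (𝓝[Set.Ioc r t] r) (𝓝 (x r)) :=
          ((hx.mono hsub) r hr_mem).mono_left
            (nhdsWithin_mono _ (fun σ hσ => ⟨le_trans hr_mem.1 hσ.1.le, hσ.2⟩))
        have hclo : r ∈ closure (Set.Ioc r t) := by
          rw [closure_Ioc hrt.ne]; exact ⟨le_rfl, hrt.le⟩
        haveI := mem_closure_iff_nhdsWithin_neBot.1 hclo
        exact le_of_tendsto hcw (eventually_mem_nhdsWithin.mono fun σ hσ => (hneg σ hσ).le)
      have hxr : x r = 0 := le_antisymm hxr_le hxr0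
      have hr0 : (0:ℝ) ≤ r := hr_mem.1
      have hrT : r ∈ Set.Icc (0:ℝ) T := ⟨hr0, le_trans hr_mem.2 ht.2⟩
      have hsub_uIcc : ∀ a b : ℝ, 0 ≤ a → a ≤ b → b ≤ T →
          IntervalIntegrable g volume a b := fun a b ha hab hbT =>
        hg.mono_set (by rw [Set.uIcc_of_le hab, Set.uIcc_of_le hT]
                        exact Set.Icc_subset_Icc ha hbT)
      have hg0r : IntervalIntegrable g volume 0 r := hsub_uIcc 0 r le_rfl hr0 hrT.2
      have hgrt : IntervalIntegrable g volume r t := hsub_uIcc r t hr0 hrt.le ht.2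
      have hsplit : (∫ τ in (0:ℝ)..r, g τ) + (∫ τ in r..t, g τ) = ∫ τ in (0:ℝ)..t, g τ :=
        intervalIntegral.integral_add_adjacent_intervals hg0r hgrt
      have hxt_eq : x t = x r + ∫ τ in r..t, g τ := by
        have h1 := heq t ht
        have h2 := heq r hrT
        rw [h1, h2]; linarith [hsplit]
      have hKy_int : IntervalIntegrable (fun τ => K * y τ) volume r t := by
        apply ContinuousOn.intervalIntegrable
        rw [Set.uIcc_of_le hrt.le]
        exact continuousOn_const.mul
          (hy_cont.mono (Set.Icc_subset_Icc hr0 ht.2))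
      have hmono : (∫ τ in r..t, (- g τ)) ≤ ∫ τ in r..t, K * y τ := by
        refine intervalIntegral.integral_mono_on hrt.le hgrt.neg hKy_int (fun σ hσ => ?_)
        have hxσ : x σ ≤ 0 := by
          rcases eq_or_lt_of_le hσ.1 with h | h
          · rw [← h]; exact hxr.le
          · exact (hneg σ ⟨h, hσ.2⟩).le
        have hσT : σ ∈ Set.Icc (0:ℝ) T := ⟨le_trans hr0 hσ.1, le_trans hσ.2 ht.2⟩
        have hbσ := hb σ hσT hxσ
        have hyσ : y σ = -x σ := max_eq_left (by linarith)
        rw [hyσ]; linarith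
      have hy0r : 0 ≤ ∫ τ in (0:ℝ)..r, y τ :=
        intervalIntegral.integral_nonneg hr0 (fun τ _ => le_max_right _ _)
      have hyint0r : IntervalIntegrable y volume 0 r := by
        apply ContinuousOn.intervalIntegrable
        rw [Set.uIcc_of_le hr0]
        exact hy_cont.mono (Set.Icc_subset_Icc le_rfl hrT.2)
      have hyintrt : IntervalIntegrable y volume r t := by
        apply ContinuousOn.intervalIntegrable
        rw [Set.uIcc_of_le hrt.le]
        exact hy_cont.mono (Set.Icc_subset_Icc hr0 ht.2)
      have hysplit : (∫ τ in (0:ℝ)..r, y τ) + (∫ τ in r..t, y τ) = ∫ τ in (0:ℝ)..t, y τ :=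
        intervalIntegral.integral_add_adjacent_intervals hyint0r hyintrt
      have hyt : y t = -x t := max_eq_left (by linarith)
      have hneg_int : (∫ τ in r..t, (- g τ)) = - ∫ τ in r..t, g τ :=
        intervalIntegral.integral_neg
      have hconst : (∫ τ in r..t, K * y τ) = K * ∫ τ in r..t, y τ :=
        intervalIntegral.integral_const_mul K y
      have hKmono : K * (∫ τ in r..t, y τ) ≤ K * ∫ τ in (0:ℝ)..t, y τ := by
        apply mul_le_mul_of_nonneg_left _ hK
        linarith
      rw [hyt, hxt_eq, hxr]
      rw [hneg_int, hconst] at hmono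
      linarith
  intro t ht
  have hzero := consortium_gronwall_zero hT hK hy_cont hy_pos hy_le t ht
  have h1 : -x t ≤ y t := le_max_left _ _
  linarith

/-- barrier lemma: upper bound. -/
lemma consortium_le_of_barrier {x g : ℝ → ℝ} {M : ℝ}
    (hx : ContinuousOn x (Set.Ici 0))
    (hg : ∀ T, 0 ≤ T → IntervalIntegrable g volume 0 T)
    (heq : ∀ t ∈ Set.Ici (0:ℝ), x t = x 0 + ∫ τ in (0:ℝ)..t, g τ)
    (hM : x 0 ≤ M)
    (hb : ∀ τ ∈ Set.Ici (0:ℝ), M ≤ x τ → g τ ≤ 0) :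
    ∀ t ∈ Set.Ici (0:ℝ), x t ≤ M := by
  intro t ht
  by_contra hlt
  push_neg at hlt
  have ht0 : (0:ℝ) ≤ t := ht
  set S : Set ℝ := Set.Icc 0 t ∩ x ⁻¹' Set.Iic M with hS_def
  have hS_closed : IsClosed S :=
    (hx.mono (fun τ hτ => hτ.1)).preimage_isClosed_of_isClosed isClosed_Icc isClosed_Iic
  have hS_ne : S.Nonempty := ⟨0, ⟨le_rfl, ht0⟩, hM⟩
  have hS_comp : IsCompact S :=
    isCompact_Icc.of_isClosed_subset hS_closed Set.inter_subset_left
  set r := sSup S with hr_def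
  have hrS : r ∈ S := hS_comp.sSup_mem hS_ne
  have hr_mem : r ∈ Set.Icc (0:ℝ) t := hrS.1
  have hxr : x r ≤ M := hrS.2
  have hr0 : (0:ℝ) ≤ r := hr_mem.1
  have hbdd : BddAbove S := hS_comp.bddAbove
  have hgt : ∀ σ ∈ Set.Ioc r t, M < x σ := by
    intro σ hσ
    by_contra h
    push_neg at h
    have hmem : σ ∈ S := ⟨⟨le_trans hr0 hσ.1.le, hσ.2⟩, h⟩
    exact absurd (le_csSup hbdd hmem) (not_le.2 hσ.1)
  have hrt : r < t := by
    rcases lt_or_eq_of_le hr_mem.2 with h | h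
    · exact h
    · exact absurd (h ▸ hxr) (not_le.2 hlt)
  have hg0r : IntervalIntegrable g volume 0 r :=
    (hg t ht0).mono_set (by rw [Set.uIcc_of_le hr0, Set.uIcc_of_le ht0]
                            exact Set.Icc_subset_Icc le_rfl hr_mem.2)
  have hgrt : IntervalIntegrable g volume r t :=
    (hg t ht0).mono_set (by rw [Set.uIcc_of_le hrt.le, Set.uIcc_of_le ht0]
                            exact Set.Icc_subset_Icc hr0 le_rfl)
  have hsplit : (∫ τ in (0:ℝ)..r, g τ) + (∫ τ in r..t, g τ) = ∫ τ in (0:ℝ)..t, g τ :=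
    intervalIntegral.integral_add_adjacent_intervals hg0r hgrt
  have hxt_eq : x t = x r + ∫ τ in r..t, g τ := by
    have h1 := heq t ht
    have h2 := heq r hr0
    rw [h1, h2]; linarith [hsplit]
  have hint_nonpos : (∫ τ in r..t, g τ) ≤ 0 := by
    rw [intervalIntegral.integral_of_le hrt.le]
    refine setIntegral_nonpos measurableSet_Ioc (fun σ hσ => ?_)
    exact hb σ (le_trans hr0 hσ.1.le) (hgt σ hσ).le
  linarith

/-- closedness helper -/
lemma consortium_le_limit_of_lt {f : ℝ → ℝ} {m tstar : ℝ} (hf : ContinuousOn f (Set.Ici 0))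
    (ht : 0 ≤ tstar) (h0 : m ≤ f 0)
    (hlt : ∀ τ, 0 ≤ τ → τ < tstar → m ≤ f τ) : m ≤ f tstar := by
  rcases eq_or_lt_of_le ht with h | h
  · rwa [← h]
  · have hcw : Tendsto f (𝓝[Set.Ico 0 tstar] tstar) (𝓝 (f tstar)) :=
      (hf tstar ht).mono_left (nhdsWithin_mono _ (fun σ hσ => hσ.1))
    have hclo : tstar ∈ closure (Set.Ico 0 tstar) := by
      rw [closure_Ico h.ne]; exact ⟨ht, le_rfl⟩
    haveI := mem_closure_iff_nhdsWithin_neBot.1 hclo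
    exact ge_of_tendsto hcw (eventually_mem_nhdsWithin.mono fun σ hσ => hlt σ hσ.1 hσ.2)

lemma consortium_fubini_triangle {f g : ℝ → ℝ} {t : ℝ} (ht : 0 ≤ t)
    (hf : IntervalIntegrable f volume 0 t) (hg : IntervalIntegrable g volume 0 t) :
    (∫ σ in (0:ℝ)..t, f σ * ∫ τ in (0:ℝ)..σ, g τ)
      + (∫ σ in (0:ℝ)..t, g σ * ∫ τ in (0:ℝ)..σ, f τ)
    = (∫ σ in (0:ℝ)..t, f σ) * ∫ σ in (0:ℝ)..t, g σ := by
  have hfI : IntegrableOn f (Set.Ioc 0 t) volume :=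
    (intervalIntegrable_iff_integrableOn_Ioc_of_le ht).1 hf
  have hgI : IntegrableOn g (Set.Ioc 0 t) volume :=
    (intervalIntegrable_iff_integrableOn_Ioc_of_le ht).1 hg
  set μ := volume.restrict (Set.Ioc (0:ℝ) t) with hμdef
  have hprod : Integrable (fun p : ℝ × ℝ => f p.1 * g p.2) (μ.prod μ) :=
    Integrable.mul_prod hfI hgI
  have hsetm : MeasurableSet {p : ℝ × ℝ | p.2 ≤ p.1} :=
    measurableSet_le measurable_snd measurable_fst
  set Φ : ℝ × ℝ → ℝ :=
    Set.indicator {p : ℝ × ℝ | p.2 ≤ p.1} (fun p => f p.1 * g p.2) with hΦdef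
  have hΦ : Integrable Φ (μ.prod μ) := hprod.indicator hsetm
  have hswap : (∫ σ, (∫ τ, Φ (σ, τ) ∂μ) ∂μ) = ∫ τ, (∫ σ, Φ (σ, τ) ∂μ) ∂μ := by
    apply MeasureTheory.integral_integral_swap
    exact hΦ
  have hL : (∫ σ, (∫ τ, Φ (σ, τ) ∂μ) ∂μ)
      = ∫ σ in Set.Ioc (0:ℝ) t, (f σ * ∫ τ in Set.Ioc (0:ℝ) σ, g τ) := by
    refine setIntegral_congr_fun measurableSet_Ioc (fun σ hσ => ?_)
    have h1 : (fun τ => Φ (σ, τ)) = (Set.Iic σ).indicator (fun τ => f σ * g τ) := by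
      funext τ
      by_cases h : τ ≤ σ <;> simp [hΦdef, Set.indicator_apply, h]
    show (∫ τ, Φ (σ, τ) ∂μ) = _
    rw [show (∫ τ, Φ (σ, τ) ∂μ) = ∫ τ, (fun τ => Φ (σ, τ)) τ ∂μ from rfl, h1, hμdef]
    rw [setIntegral_indicator measurableSet_Iic]
    rw [Set.Ioc_inter_Iic, min_eq_right hσ.2]
    exact MeasureTheory.integral_const_mul _ _
  have hR : (∫ τ, (∫ σ, Φ (σ, τ) ∂μ) ∂μ)
      = ∫ τ in Set.Ioc (0:ℝ) t, (g τ * ∫ σ in Set.Ioc τ t, f σ) := by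
    refine setIntegral_congr_fun measurableSet_Ioc (fun τ hτ => ?_)
    have h1 : (fun σ => Φ (σ, τ)) = (Set.Ici τ).indicator (fun σ => f σ * g τ) := by
      funext σ
      by_cases h : τ ≤ σ <;> simp [hΦdef, Set.indicator_apply, h]
    show (∫ σ, Φ (σ, τ) ∂μ) = _
    rw [show (∫ σ, Φ (σ, τ) ∂μ) = ∫ σ, (fun σ => Φ (σ, τ)) σ ∂μ from rfl, h1, hμdef]
    rw [setIntegral_indicator measurableSet_Ici]
    have h2 : Set.Ioc (0:ℝ) t ∩ Set.Ici τ = Set.Icc τ t := by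
      ext σ
      simp only [Set.mem_inter_iff, Set.mem_Ioc, Set.mem_Ici, Set.mem_Icc]
      constructor
      · rintro ⟨⟨_, h2⟩, h3⟩; exact ⟨h3, h2⟩
      · rintro ⟨h1', h2⟩; exact ⟨⟨lt_of_lt_of_le hτ.1 h1', h2⟩, h1'⟩
    rw [h2, integral_Icc_eq_integral_Ioc]
    rw [MeasureTheory.integral_mul_const]
    ring
  have hL' : (∫ σ in (0:ℝ)..t, f σ * ∫ τ in (0:ℝ)..σ, g τ)
      = ∫ σ in Set.Ioc (0:ℝ) t, (f σ * ∫ τ in Set.Ioc (0:ℝ) σ, g τ) := by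
    rw [intervalIntegral.integral_of_le ht]
    refine setIntegral_congr_fun measurableSet_Ioc (fun σ hσ => ?_)
    rw [intervalIntegral.integral_of_le hσ.1.le]
  have hR0 : (∫ σ in (0:ℝ)..t, g σ * ∫ τ in (0:ℝ)..σ, f τ)
      = ∫ σ in Set.Ioc (0:ℝ) t, (g σ * ∫ τ in Set.Ioc (0:ℝ) σ, f τ) := by
    rw [intervalIntegral.integral_of_le ht]
    refine setIntegral_congr_fun measurableSet_Ioc (fun σ hσ => ?_)
    rw [intervalIntegral.integral_of_le hσ.1.le]
  have hsplitf : ∀ τ ∈ Set.Ioc (0:ℝ) t,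
      (∫ σ in Set.Ioc τ t, f σ)
        = (∫ σ in Set.Ioc (0:ℝ) t, f σ) - ∫ σ in Set.Ioc (0:ℝ) τ, f σ := by
    intro τ hτ
    have h1 : IntervalIntegrable f volume 0 τ :=
      hf.mono_set (by rw [Set.uIcc_of_le hτ.1.le, Set.uIcc_of_le ht]
                      exact Set.Icc_subset_Icc le_rfl hτ.2)
    have h2 : IntervalIntegrable f volume τ t :=
      hf.mono_set (by rw [Set.uIcc_of_le hτ.2, Set.uIcc_of_le ht]
                      exact Set.Icc_subset_Icc hτ.1.le le_rfl)
    have h3 := intervalIntegral.integral_add_adjacent_intervals h1 h2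
    rw [intervalIntegral.integral_of_le hτ.1.le, intervalIntegral.integral_of_le hτ.2,
      intervalIntegral.integral_of_le ht] at h3
    linarith
  have hFcont : ContinuousOn (fun τ => ∫ σ in (0:ℝ)..τ, f σ) (Set.Icc 0 t) := by
    have h := intervalIntegral.continuousOn_primitive_interval
      (f := f) (a := (0:ℝ)) (b := t) (μ := volume)
      (by rw [Set.uIcc_of_le ht]; rwa [integrableOn_Icc_iff_integrableOn_Ioc])
    rwa [Set.uIcc_of_le ht] at h
  have hgF : Integrable (fun τ => g τ * ∫ σ in (0:ℝ)..τ, f σ) μ := by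
    have h := consortium_II_mul_cont ht hFcont hg
    have e1 : (fun τ => (∫ σ in (0:ℝ)..τ, f σ) * g τ)
        = fun τ => g τ * ∫ σ in (0:ℝ)..τ, f σ := by funext τ; ring
    rw [e1] at h
    exact (intervalIntegrable_iff_integrableOn_Ioc_of_le ht).1 h
  have hgF2 : Integrable (fun τ => g τ * ∫ σ in Set.Ioc (0:ℝ) τ, f σ) μ := by
    refine hgF.congr ?_
    refine (ae_restrict_iff' measurableSet_Ioc).2 (ae_of_all _ fun τ hτ => ?_)
    show g τ * (∫ σ in (0:ℝ)..τ, f σ) = g τ * ∫ σ in Set.Ioc (0:ℝ) τ, f σ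
    rw [intervalIntegral.integral_of_le hτ.1.le]
  have hgA : Integrable (fun τ => g τ * ∫ σ in Set.Ioc (0:ℝ) t, f σ) μ :=
    hgI.mul_const _
  have hRsplit : (∫ τ in Set.Ioc (0:ℝ) t, (g τ * ∫ σ in Set.Ioc τ t, f σ))
      = ∫ τ in Set.Ioc (0:ℝ) t, (g τ * (∫ σ in Set.Ioc (0:ℝ) t, f σ)
          - g τ * ∫ σ in Set.Ioc (0:ℝ) τ, f σ) := by
    refine setIntegral_congr_fun measurableSet_Ioc (fun τ hτ => ?_)
    rw [hsplitf τ hτ]; ring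
  have hRsub : (∫ τ in Set.Ioc (0:ℝ) t, (g τ * (∫ σ in Set.Ioc (0:ℝ) t, f σ)
          - g τ * ∫ σ in Set.Ioc (0:ℝ) τ, f σ))
      = (∫ τ in Set.Ioc (0:ℝ) t, g τ * (∫ σ in Set.Ioc (0:ℝ) t, f σ))
        - ∫ τ in Set.Ioc (0:ℝ) t, (g τ * ∫ σ in Set.Ioc (0:ℝ) τ, f σ) :=
    MeasureTheory.integral_sub hgA hgF2
  have hgAval : (∫ τ in Set.Ioc (0:ℝ) t, g τ * ∫ σ in Set.Ioc (0:ℝ) t, f σ)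
      = (∫ τ in Set.Ioc (0:ℝ) t, g τ) * ∫ σ in Set.Ioc (0:ℝ) t, f σ :=
    MeasureTheory.integral_mul_const _ _
  rw [hL', ← hL, hswap, hR, hRsplit, hRsub, hgAval, hR0]
  rw [intervalIntegral.integral_of_le ht, intervalIntegral.integral_of_le ht]
  ring

lemma consortium_prod_rule {u w fu fw : ℝ → ℝ} {T : ℝ} (hT : 0 ≤ T)
    (hu_cont : ContinuousOn u (Set.Icc 0 T)) (hw_cont : ContinuousOn w (Set.Icc 0 T))
    (hfu : IntervalIntegrable fu volume 0 T) (hfw : IntervalIntegrable fw volume 0 T)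
    (hu : ∀ t ∈ Set.Icc (0:ℝ) T, u t = u 0 + ∫ τ in (0:ℝ)..t, fu τ)
    (hw : ∀ t ∈ Set.Icc (0:ℝ) T, w t = w 0 + ∫ τ in (0:ℝ)..t, fw τ) :
    ∀ t ∈ Set.Icc (0:ℝ) T,
      u t * w t = u 0 * w 0 + ∫ τ in (0:ℝ)..t, (fu τ * w τ + u τ * fw τ) := by
  intro t ht
  have ht0 : (0:ℝ) ≤ t := ht.1
  have hsub : Set.Icc (0:ℝ) t ⊆ Set.Icc (0:ℝ) T := Set.Icc_subset_Icc le_rfl ht.2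
  have huIcc : Set.uIcc (0:ℝ) t ⊆ Set.uIcc (0:ℝ) T := by
    rw [Set.uIcc_of_le ht0, Set.uIcc_of_le hT]; exact hsub
  have hfu' : IntervalIntegrable fu volume 0 t := hfu.mono_set huIcc
  have hfw' : IntervalIntegrable fw volume 0 t := hfw.mono_set huIcc
  have hu_c : ContinuousOn u (Set.Icc 0 t) := hu_cont.mono hsub
  have hw_c : ContinuousOn w (Set.Icc 0 t) := hw_cont.mono hsub
  have ifuw : IntervalIntegrable (fun τ => fu τ * w τ) volume 0 t := by
    have h := consortium_II_mul_cont ht0 hw_c hfu'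
    have e1 : (fun τ => w τ * fu τ) = fun τ => fu τ * w τ := by funext τ; ring
    rwa [e1] at h
  have iufw : IntervalIntegrable (fun τ => u τ * fw τ) volume 0 t :=
    consortium_II_mul_cont ht0 hu_c hfw'
  have hFw_cont : ContinuousOn (fun τ => ∫ σ in (0:ℝ)..τ, fw σ) (Set.Icc 0 t) := by
    have h := intervalIntegral.continuousOn_primitive_interval
      (f := fw) (a := (0:ℝ)) (b := t) (μ := volume)
      (by rw [Set.uIcc_of_le ht0, integrableOn_Icc_iff_integrableOn_Ioc]
          exact (intervalIntegrable_iff_integrableOn_Ioc_of_le ht0).1 hfw')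
    rwa [Set.uIcc_of_le ht0] at h
  have hFu_cont : ContinuousOn (fun τ => ∫ σ in (0:ℝ)..τ, fu σ) (Set.Icc 0 t) := by
    have h := intervalIntegral.continuousOn_primitive_interval
      (f := fu) (a := (0:ℝ)) (b := t) (μ := volume)
      (by rw [Set.uIcc_of_le ht0, integrableOn_Icc_iff_integrableOn_Ioc]
          exact (intervalIntegrable_iff_integrableOn_Ioc_of_le ht0).1 hfu')
    rwa [Set.uIcc_of_le ht0] at h
  have ifuG : IntervalIntegrable (fun τ => fu τ * ∫ σ in (0:ℝ)..τ, fw σ) volume 0 t := by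
    have h := consortium_II_mul_cont ht0 hFw_cont hfu'
    have e1 : (fun τ => (∫ σ in (0:ℝ)..τ, fw σ) * fu τ)
        = fun τ => fu τ * ∫ σ in (0:ℝ)..τ, fw σ := by funext τ; ring
    rwa [e1] at h
  have ifwF : IntervalIntegrable (fun τ => fw τ * ∫ σ in (0:ℝ)..τ, fu σ) volume 0 t := by
    have h := consortium_II_mul_cont ht0 hFu_cont hfw'
    have e1 : (fun τ => (∫ σ in (0:ℝ)..τ, fu σ) * fw τ)
        = fun τ => fw τ * ∫ σ in (0:ℝ)..τ, fu σ := by funext τ; ring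
    rwa [e1] at h
  have e2 : (∫ τ in (0:ℝ)..t, fu τ * w τ)
      = (∫ τ in (0:ℝ)..t, fu τ) * w 0
        + ∫ τ in (0:ℝ)..t, (fu τ * ∫ σ in (0:ℝ)..τ, fw σ) := by
    have hcongr : (∫ τ in (0:ℝ)..t, fu τ * w τ)
        = ∫ τ in (0:ℝ)..t, (fu τ * w 0 + fu τ * ∫ σ in (0:ℝ)..τ, fw σ) := by
      apply intervalIntegral.integral_congr
      intro τ hτ
      rw [Set.uIcc_of_le ht0] at hτ
      have h := hw τ (hsub hτ)
      simp only []
      rw [h]; ring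
    rw [hcongr, intervalIntegral.integral_add (hfu'.mul_const _) ifuG,
      intervalIntegral.integral_mul_const]
  have e3 : (∫ τ in (0:ℝ)..t, u τ * fw τ)
      = (∫ τ in (0:ℝ)..t, fw τ) * u 0
        + ∫ τ in (0:ℝ)..t, (fw τ * ∫ σ in (0:ℝ)..τ, fu σ) := by
    have hcongr : (∫ τ in (0:ℝ)..t, u τ * fw τ)
        = ∫ τ in (0:ℝ)..t, (fw τ * u 0 + fw τ * ∫ σ in (0:ℝ)..τ, fu σ) := by
      apply intervalIntegral.integral_congr
      intro τ hτ
      rw [Set.uIcc_of_le ht0] at hτ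
      have h := hu τ (hsub hτ)
      simp only []
      rw [h]; ring
    rw [hcongr, intervalIntegral.integral_add (hfw'.mul_const _) ifwF,
      intervalIntegral.integral_mul_const]
  have hfub := consortium_fubini_triangle ht0 hfu' hfw'
  have hut := hu t ht
  have hwt := hw t ht
  rw [intervalIntegral.integral_add ifuw iufw, e2, e3, hut, hwt]
  linear_combination -hfub

end ConsortiumAux

set_option maxHeartbeats 3200000 in
/-- Every absolutely continuous solution of the consortium model (expressed in integral form)
on `[0,∞)` with measurable controls `α(t) ∈ [0,1]`, `d(t) ∈ [0,d_max]` and initial condition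
in `{s ≥ 0, e ≥ 0, v ≥ 0, q ≥ q_min, c ≥ 0}` remains in that region for all `t ≥ 0`, and all
five components are bounded on `[0,∞)`. -/
theorem consortium_invariance_and_boundedness
    (phimax ks rhomax kv mumax qmin beta gamma sIn dmax : ℝ)
    (hphimax : 0 < phimax) (hks : 0 < ks) (hrho : 0 < rhomax) (hkv : 0 < kv)
    (hmu : 0 < mumax) (hqmin : 0 < qmin) (hbeta : 0 < beta) (hgamma : 0 < gamma)
    (hsIn : 0 < sIn) (hdmax : 0 < dmax)
    (s e v q c alpha d : ℝ → ℝ)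
    (halpha_meas : Measurable alpha) (hd_meas : Measurable d)
    (halpha : ∀ t ∈ Set.Ici (0:ℝ), alpha t ∈ Set.Icc (0:ℝ) 1)
    (hd : ∀ t ∈ Set.Ici (0:ℝ), d t ∈ Set.Icc (0:ℝ) dmax)
    (hs_cont : ContinuousOn s (Set.Ici 0)) (he_cont : ContinuousOn e (Set.Ici 0))
    (hv_cont : ContinuousOn v (Set.Ici 0)) (hq_cont : ContinuousOn q (Set.Ici 0))
    (hc_cont : ContinuousOn c (Set.Ici 0))
    (hsys : ∀ t ∈ Set.Ici (0:ℝ),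
      (s t = s 0 + ∫ τ in (0:ℝ)..t,
        (-(1/gamma) * (phimax * s τ / (ks + s τ)) * e τ + d τ * (sIn - s τ))) ∧
      (e t = e 0 + ∫ τ in (0:ℝ)..t,
        ((1 - alpha τ) * (phimax * s τ / (ks + s τ)) * e τ - d τ * e τ)) ∧
      (v t = v 0 + ∫ τ in (0:ℝ)..t,
        (alpha τ * beta * (phimax * s τ / (ks + s τ)) * e τ
          - (rhomax * v τ / (kv + v τ)) * c τ - d τ * v τ)) ∧
      (q t = q 0 + ∫ τ in (0:ℝ)..t,
        ((rhomax * v τ / (kv + v τ)) - mumax * (1 - qmin / q τ) * q τ)) ∧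
      (c t = c 0 + ∫ τ in (0:ℝ)..t,
        ((mumax * (1 - qmin / q τ) - d τ) * c τ)))
    (hinit : 0 ≤ s 0 ∧ 0 ≤ e 0 ∧ 0 ≤ v 0 ∧ qmin ≤ q 0 ∧ 0 ≤ c 0) :
    (∀ t ∈ Set.Ici (0:ℝ),
      0 ≤ s t ∧ 0 ≤ e t ∧ 0 ≤ v t ∧ qmin ≤ q t ∧ 0 ≤ c t) ∧
    (∃ M : ℝ, ∀ t ∈ Set.Ici (0:ℝ),
      |s t| ≤ M ∧ |e t| ≤ M ∧ |v t| ≤ M ∧ |q t| ≤ M ∧ |c t| ≤ M) := by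
  obtain ⟨hs0, he0, hv0, hq0, hc0⟩ := hinit
  have hsC : ∀ {T : ℝ}, ContinuousOn s (Set.Icc 0 T) :=
    fun {T} => hs_cont.mono (fun τ hτ => hτ.1)
  have heC : ∀ {T : ℝ}, ContinuousOn e (Set.Icc 0 T) :=
    fun {T} => he_cont.mono (fun τ hτ => hτ.1)
  have hvC : ∀ {T : ℝ}, ContinuousOn v (Set.Icc 0 T) :=
    fun {T} => hv_cont.mono (fun τ hτ => hτ.1)
  have hqC : ∀ {T : ℝ}, ContinuousOn q (Set.Icc 0 T) :=
    fun {T} => hq_cont.mono (fun τ hτ => hτ.1)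
  have hcC : ∀ {T : ℝ}, ContinuousOn c (Set.Icc 0 T) :=
    fun {T} => hc_cont.mono (fun τ hτ => hτ.1)
  have hdabs : ∀ {T : ℝ}, ∀ τ ∈ Set.Icc (0:ℝ) T, |d τ| ≤ dmax := fun {T} τ hτ => by
    have h := hd τ hτ.1
    exact abs_le.2 ⟨by linarith [h.1, hdmax.le], h.2⟩
  have h1aabs : ∀ {T : ℝ}, ∀ τ ∈ Set.Icc (0:ℝ) T, |1 - alpha τ| ≤ 1 := fun {T} τ hτ => by
    have h := halpha τ hτ.1
    exact abs_le.2 ⟨by linarith [h.2], by linarith [h.1]⟩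
  have haabs : ∀ {T : ℝ}, ∀ τ ∈ Set.Icc (0:ℝ) T, |alpha τ| ≤ 1 := fun {T} τ hτ => by
    have h := halpha τ hτ.1
    exact abs_le.2 ⟨by linarith [h.1], h.2⟩
  -- integrability of the five integrands, assuming cutoff bounds
  have hInt : ∀ T1 : ℝ, 0 ≤ T1 →
      (∀ τ ∈ Set.Icc (0:ℝ) T1, -ks/2 ≤ s τ ∧ -kv/2 ≤ v τ ∧ qmin/2 ≤ q τ) →
      IntervalIntegrable (fun τ =>
        -(1/gamma) * (phimax * s τ / (ks + s τ)) * e τ + d τ * (sIn - s τ)) volume 0 T1 ∧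
      IntervalIntegrable (fun τ =>
        (1 - alpha τ) * (phimax * s τ / (ks + s τ)) * e τ - d τ * e τ) volume 0 T1 ∧
      IntervalIntegrable (fun τ =>
        alpha τ * beta * (phimax * s τ / (ks + s τ)) * e τ
          - (rhomax * v τ / (kv + v τ)) * c τ - d τ * v τ) volume 0 T1 ∧
      IntervalIntegrable (fun τ =>
        (rhomax * v τ / (kv + v τ)) - mumax * (1 - qmin / q τ) * q τ) volume 0 T1 ∧
      IntervalIntegrable (fun τ =>
        (mumax * (1 - qmin / q τ) - d τ) * c τ) volume 0 T1 := by
    intro T1 hT1 hQ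
    have hsne : ∀ τ ∈ Set.Icc (0:ℝ) T1, ks + s τ ≠ 0 := fun τ hτ =>
      ne_of_gt (by nlinarith [(hQ τ hτ).1])
    have hvne : ∀ τ ∈ Set.Icc (0:ℝ) T1, kv + v τ ≠ 0 := fun τ hτ =>
      ne_of_gt (by nlinarith [(hQ τ hτ).2.1])
    have hqne : ∀ τ ∈ Set.Icc (0:ℝ) T1, q τ ≠ 0 := fun τ hτ =>
      ne_of_gt (by nlinarith [(hQ τ hτ).2.2])
    have hFc : ContinuousOn (fun τ => phimax * s τ / (ks + s τ)) (Set.Icc 0 T1) :=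
      (continuousOn_const.mul hsC).div (continuousOn_const.add hsC) hsne
    have hGc : ContinuousOn (fun τ => rhomax * v τ / (kv + v τ)) (Set.Icc 0 T1) :=
      (continuousOn_const.mul hvC).div (continuousOn_const.add hvC) hvne
    have hHc : ContinuousOn (fun τ => mumax * (1 - qmin / q τ)) (Set.Icc 0 T1) :=
      continuousOn_const.mul (continuousOn_const.sub (continuousOn_const.div hqC hqne))
    refine ⟨?_, ?_, ?_, ?_, ?_⟩
    · have e1 : (fun τ =>
          -(1/gamma) * (phimax * s τ / (ks + s τ)) * e τ + d τ * (sIn - s τ))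
          = fun τ => (-(1/gamma) * (phimax * s τ / (ks + s τ)) * e τ)
            + (sIn - s τ) * d τ := by funext τ; ring
      rw [e1]
      refine IntervalIntegrable.add ?_
        (consortium_II_of_bdd_meas hT1 (continuousOn_const.sub hsC) hd_meas hdabs)
      apply ContinuousOn.intervalIntegrable
      rw [Set.uIcc_of_le hT1]
      exact (continuousOn_const.mul hFc).mul heC
    · have e1 : (fun τ =>
          (1 - alpha τ) * (phimax * s τ / (ks + s τ)) * e τ - d τ * e τ)
          = fun τ => ((phimax * s τ / (ks + s τ)) * e τ) * (1 - alpha τ)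
            + (-(e τ)) * d τ := by funext τ; ring
      rw [e1]
      exact (consortium_II_of_bdd_meas hT1 (hFc.mul heC)
          (measurable_const.sub halpha_meas) h1aabs).add
        (consortium_II_of_bdd_meas hT1 heC.neg hd_meas hdabs)
    · have e1 : (fun τ =>
          alpha τ * beta * (phimax * s τ / (ks + s τ)) * e τ
            - (rhomax * v τ / (kv + v τ)) * c τ - d τ * v τ)
          = fun τ => (((beta * (phimax * s τ / (ks + s τ))) * e τ) * alpha τ
            + (-((rhomax * v τ / (kv + v τ)) * c τ)))
            + (-(v τ)) * d τ := by funext τ; ring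
      rw [e1]
      refine IntervalIntegrable.add (IntervalIntegrable.add ?_ ?_) ?_
      · exact consortium_II_of_bdd_meas hT1
          ((continuousOn_const.mul hFc).mul heC) halpha_meas haabs
      · apply ContinuousOn.intervalIntegrable
        rw [Set.uIcc_of_le hT1]
        exact (hGc.mul hcC).neg
      · exact consortium_II_of_bdd_meas hT1 hvC.neg hd_meas hdabs
    · apply ContinuousOn.intervalIntegrable
      rw [Set.uIcc_of_le hT1]
      exact hGc.sub (hHc.mul hqC)
    · have e1 : (fun τ => (mumax * (1 - qmin / q τ) - d τ) * c τ)
          = fun τ => ((mumax * (1 - qmin / q τ)) * c τ) + (-(c τ)) * d τ := by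
        funext τ; ring
      rw [e1]
      refine IntervalIntegrable.add ?_
        (consortium_II_of_bdd_meas hT1 hcC.neg hd_meas hdabs)
      apply ContinuousOn.intervalIntegrable
      rw [Set.uIcc_of_le hT1]
      exact hHc.mul hcC
  -- key: on a cutoff interval, invariance holds
  have key : ∀ T1 : ℝ, 0 ≤ T1 →
      (∀ τ ∈ Set.Icc (0:ℝ) T1, -ks/2 ≤ s τ ∧ -kv/2 ≤ v τ ∧ qmin/2 ≤ q τ) →
      ∀ t ∈ Set.Icc (0:ℝ) T1,
        0 ≤ s t ∧ 0 ≤ e t ∧ 0 ≤ v t ∧ qmin ≤ q t ∧ 0 ≤ c t := by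
    intro T1 hT1 hQ
    obtain ⟨iGS, iGE, iGV, iGQ, iGC⟩ := hInt T1 hT1 hQ
    obtain ⟨Bs, hBs⟩ := isCompact_Icc.exists_bound_of_continuousOn (hsC (T := T1))
    have hBs' : ∀ τ ∈ Set.Icc (0:ℝ) T1, |s τ| ≤ Bs := fun τ hτ => by
      have h := hBs τ hτ; rwa [Real.norm_eq_abs] at h
    have hBs0 : (0:ℝ) ≤ Bs := le_trans (abs_nonneg _) (hBs' 0 ⟨le_rfl, hT1⟩)
    have hden : ∀ τ ∈ Set.Icc (0:ℝ) T1, (0:ℝ) < ks + s τ := fun τ hτ => by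
      nlinarith [(hQ τ hτ).1]
    have hdenv : ∀ τ ∈ Set.Icc (0:ℝ) T1, (0:ℝ) < kv + v τ := fun τ hτ => by
      nlinarith [(hQ τ hτ).2.1]
    have hqpos : ∀ τ ∈ Set.Icc (0:ℝ) T1, (0:ℝ) < q τ := fun τ hτ => by
      nlinarith [(hQ τ hτ).2.2]
    -- e ≥ 0
    have hE : ∀ t ∈ Set.Icc (0:ℝ) T1, 0 ≤ e t := by
      refine consortium_nonneg_of_linear_lower (K := 2*phimax*Bs/ks) hT1
        (by positivity) heC iGE (fun t ht => (hsys t ht.1).2.1) ?_ he0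
      intro τ hτ hneg
      show 2*phimax*Bs/ks * e τ
        ≤ (1 - alpha τ) * (phimax * s τ / (ks + s τ)) * e τ - d τ * e τ
      have hα := halpha τ hτ.1
      have hdτ := hd τ hτ.1
      have hd1 := hden τ hτ
      have habs := abs_le.1 (hBs' τ hτ)
      have hF_le : phimax * s τ / (ks + s τ) ≤ 2*phimax*Bs/ks := by
        rw [div_le_iff₀ hd1]
        have h2 : 2*phimax*Bs/ks * (ks/2) = phimax * Bs := by field_simp
        nlinarith [(hQ τ hτ).1, div_nonneg (by positivity : (0:ℝ) ≤ 2*phimax*Bs) hks.le]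
      have hcoef : (1 - alpha τ) * (phimax * s τ / (ks + s τ)) - d τ ≤ 2*phimax*Bs/ks := by
        have h1 : 0 ≤ 1 - alpha τ := by linarith [hα.2]
        have h2 : 1 - alpha τ ≤ 1 := by linarith [hα.1]
        have hK0 : (0:ℝ) ≤ 2*phimax*Bs/ks := by positivity
        rcases le_or_gt 0 (phimax * s τ / (ks + s τ)) with h | h
        · nlinarith [hdτ.1, hdτ.2, hα.1, hα.2]
        · nlinarith [hdτ.1, hdτ.2, hα.1, hα.2]
      have h3 := mul_le_mul_of_nonpos_right hcoef hneg
      calc 2*phimax*Bs/ks * e τ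
          ≤ ((1 - alpha τ) * (phimax * s τ / (ks + s τ)) - d τ) * e τ := h3
        _ = (1 - alpha τ) * (phimax * s τ / (ks + s τ)) * e τ - d τ * e τ := by ring
    -- c ≥ 0
    have hCpos : ∀ t ∈ Set.Icc (0:ℝ) T1, 0 ≤ c t := by
      refine consortium_nonneg_of_linear_lower (K := mumax) hT1 hmu.le hcC iGC
        (fun t ht => (hsys t ht.1).2.2.2.2) ?_ hc0
      intro τ hτ hneg
      show mumax * c τ ≤ (mumax * (1 - qmin / q τ) - d τ) * c τ
      have hdτ := hd τ hτ.1
      have hqp := hqpos τ hτ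
      have hqq : 0 ≤ qmin / q τ := div_nonneg hqmin.le hqp.le
      have hcoef : mumax * (1 - qmin / q τ) - d τ ≤ mumax := by
        nlinarith [hdτ.1, hqq, hmu.le]
      exact mul_le_mul_of_nonpos_right hcoef hneg
    -- s ≥ 0
    have hS : ∀ t ∈ Set.Icc (0:ℝ) T1, 0 ≤ s t := by
      refine consortium_nonneg_of_linear_lower (K := 0) hT1 le_rfl hsC iGS
        (fun t ht => (hsys t ht.1).1) ?_ hs0
      intro τ hτ hneg
      show (0:ℝ) * s τ
        ≤ -(1/gamma) * (phimax * s τ / (ks + s τ)) * e τ + d τ * (sIn - s τ)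
      have hd1 := hden τ hτ
      have hF_np : phimax * s τ / (ks + s τ) ≤ 0 :=
        div_nonpos_iff.2 (Or.inr ⟨by nlinarith, hd1.le⟩)
      have he1 := hE τ hτ
      have h1 : 0 ≤ -(1/gamma) * (phimax * s τ / (ks + s τ)) * e τ := by
        have h := mul_nonneg (mul_nonneg (by positivity : (0:ℝ) ≤ 1/gamma)
          (neg_nonneg.2 hF_np)) he1
        nlinarith [h]
      have h2 : 0 ≤ d τ * (sIn - s τ) :=
        mul_nonneg (hd τ hτ.1).1 (by nlinarith)
      nlinarith [h1, h2]
    -- v ≥ 0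
    have hV : ∀ t ∈ Set.Icc (0:ℝ) T1, 0 ≤ v t := by
      refine consortium_nonneg_of_linear_lower (K := 0) hT1 le_rfl hvC iGV
        (fun t ht => (hsys t ht.1).2.2.1) ?_ hv0
      intro τ hτ hneg
      show (0:ℝ) * v τ
        ≤ alpha τ * beta * (phimax * s τ / (ks + s τ)) * e τ
          - (rhomax * v τ / (kv + v τ)) * c τ - d τ * v τ
      have hsτ := hS τ hτ
      have he1 := hE τ hτ
      have hc1 := hCpos τ hτ
      have hα := halpha τ hτ.1
      have hdτ := hd τ hτ.1
      have hF_nn : 0 ≤ phimax * s τ / (ks + s τ) :=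
        div_nonneg (mul_nonneg hphimax.le hsτ) (hden τ hτ).le
      have t1 : 0 ≤ alpha τ * beta * (phimax * s τ / (ks + s τ)) * e τ :=
        mul_nonneg (mul_nonneg (mul_nonneg hα.1 hbeta.le) hF_nn) he1
      have hG_np : rhomax * v τ / (kv + v τ) ≤ 0 :=
        div_nonpos_iff.2 (Or.inr ⟨by nlinarith, (hdenv τ hτ).le⟩)
      have t2 : (rhomax * v τ / (kv + v τ)) * c τ ≤ 0 := by
        nlinarith [mul_nonneg (neg_nonneg.2 hG_np) hc1]
      have t3 : d τ * v τ ≤ 0 := by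
        nlinarith [mul_nonneg hdτ.1 (neg_nonneg.2 hneg)]
      nlinarith [t1, t2, t3]
    -- q ≥ qmin
    have hQm : ∀ t ∈ Set.Icc (0:ℝ) T1, 0 ≤ q t - qmin := by
      refine consortium_nonneg_of_linear_lower (K := mumax)
        (x := fun t => q t - qmin) hT1 hmu.le (hqC.sub continuousOn_const) iGQ ?_ ?_
        (by linarith : (0:ℝ) ≤ q 0 - qmin)
      · intro t ht
        show q t - qmin = q 0 - qmin + ∫ τ in (0:ℝ)..t,
          ((rhomax * v τ / (kv + v τ)) - mumax * (1 - qmin / q τ) * q τ)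
        have h := (hsys t ht.1).2.2.2.1
        linarith [h]
      · intro τ hτ hneg
        have hneg' : q τ - qmin ≤ 0 := hneg
        show mumax * (q τ - qmin)
          ≤ (rhomax * v τ / (kv + v τ)) - mumax * (1 - qmin / q τ) * q τ
        have hv1 := hV τ hτ
        have hGnn : 0 ≤ rhomax * v τ / (kv + v τ) :=
          div_nonneg (mul_nonneg hrho.le hv1) (hdenv τ hτ).le
        have hqp := hqpos τ hτ
        have hid : mumax * (1 - qmin / q τ) * q τ = mumax * (q τ - qmin) := by
          field_simp
        rw [hid]
        nlinarith [mul_nonneg hmu.le (neg_nonneg.2 hneg')]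
    intro t ht
    have hq' : 0 ≤ q t - qmin := hQm t ht
    exact ⟨hS t ht, hE t ht, hV t ht, by linarith, hCpos t ht⟩
  -- global invariance
  have hP : ∀ t ∈ Set.Ici (0:ℝ),
      0 ≤ s t ∧ 0 ≤ e t ∧ 0 ≤ v t ∧ qmin ≤ q t ∧ 0 ≤ c t := by
    intro T hT
    set B : Set ℝ := {T' : ℝ | T' ∈ Set.Icc (0:ℝ) T ∧
      ∀ τ ∈ Set.Icc (0:ℝ) T', -ks/2 ≤ s τ ∧ -kv/2 ≤ v τ ∧ qmin/2 ≤ q τ} with hBdef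
    have hB0 : (0:ℝ) ∈ B := by
      refine ⟨⟨le_rfl, hT⟩, fun τ hτ => ?_⟩
      have hτ0 : τ = 0 := le_antisymm hτ.2 hτ.1
      rw [hτ0]
      exact ⟨by linarith, by linarith, by linarith⟩
    have hBne : B.Nonempty := ⟨0, hB0⟩
    have hBdd : BddAbove B := ⟨T, fun x hx => hx.1.2⟩
    have ht0 : 0 ≤ sSup B := le_csSup hBdd hB0
    have htT : sSup B ≤ T := csSup_le hBne (fun x hx => hx.1.2)
    have hQlt : ∀ τ, 0 ≤ τ → τ < sSup B →
        -ks/2 ≤ s τ ∧ -kv/2 ≤ v τ ∧ qmin/2 ≤ q τ := by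
      intro τ h0τ hτ
      obtain ⟨T', hT'B, hτT'⟩ := exists_lt_of_lt_csSup hBne hτ
      exact hT'B.2 τ ⟨h0τ, hτT'.le⟩
    have hQstar : ∀ τ ∈ Set.Icc (0:ℝ) (sSup B),
        -ks/2 ≤ s τ ∧ -kv/2 ≤ v τ ∧ qmin/2 ≤ q τ := by
      intro τ hτ
      rcases lt_or_eq_of_le hτ.2 with h | h
      · exact hQlt τ hτ.1 h
      · rw [h]
        exact ⟨consortium_le_limit_of_lt hs_cont ht0 (by linarith)
            (fun σ h1 h2 => (hQlt σ h1 h2).1),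
          consortium_le_limit_of_lt hv_cont ht0 (by linarith)
            (fun σ h1 h2 => (hQlt σ h1 h2).2.1),
          consortium_le_limit_of_lt hq_cont ht0 (by linarith)
            (fun σ h1 h2 => (hQlt σ h1 h2).2.2)⟩
    have hPstar := key (sSup B) ht0 hQstar
    have htstarT : sSup B = T := by
      by_contra hne
      have hlt : sSup B < T := lt_of_le_of_ne htT hne
      obtain ⟨hsx, hex, hvx, hqx, hcx⟩ := hPstar (sSup B) ⟨ht0, le_rfl⟩
      have hev : ∀ᶠ τ in nhdsWithin (sSup B) (Set.Ici 0),
          -ks/2 < s τ ∧ -kv/2 < v τ ∧ qmin/2 < q τ := by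
        have h1 : ∀ᶠ τ in nhdsWithin (sSup B) (Set.Ici 0), -ks/2 < s τ :=
          (hs_cont (sSup B) ht0).eventually (eventually_gt_nhds (by linarith))
        have h2 : ∀ᶠ τ in nhdsWithin (sSup B) (Set.Ici 0), -kv/2 < v τ :=
          (hv_cont (sSup B) ht0).eventually (eventually_gt_nhds (by linarith))
        have h3 : ∀ᶠ τ in nhdsWithin (sSup B) (Set.Ici 0), qmin/2 < q τ :=
          (hq_cont (sSup B) ht0).eventually (eventually_gt_nhds (by linarith))
        exact h1.and (h2.and h3)
      rw [Filter.Eventually, Metric.mem_nhdsWithin_iff] at hev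
      obtain ⟨ε, hε, hball⟩ := hev
      have ht2gt : sSup B < min (sSup B + ε/2) T := lt_min (by linarith) hlt
      have ht2B : min (sSup B + ε/2) T ∈ B := by
        refine ⟨⟨le_trans ht0 ht2gt.le, min_le_right _ _⟩, fun τ hτ => ?_⟩
        rcases le_or_gt τ (sSup B) with h | h
        · exact hQstar τ ⟨hτ.1, h⟩
        · have hmem : τ ∈ Metric.ball (sSup B) ε ∩ Set.Ici 0 := by
            constructor
            · rw [Metric.mem_ball, Real.dist_eq,
                abs_of_pos (by linarith : 0 < τ - sSup B)]
              have h5 : τ ≤ sSup B + ε/2 := le_trans hτ.2 (min_le_left _ _)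
              linarith
            · exact hτ.1
          have hp := hball hmem
          exact ⟨hp.1.le, hp.2.1.le, hp.2.2.le⟩
      exact absurd (le_csSup hBdd ht2B) (not_le.2 ht2gt)
    rw [htstarT] at hPstar
    exact hPstar T ⟨hT, le_rfl⟩
  -- boundedness
  have hQall : ∀ T1 : ℝ, 0 ≤ T1 → ∀ τ ∈ Set.Icc (0:ℝ) T1,
      -ks/2 ≤ s τ ∧ -kv/2 ≤ v τ ∧ qmin/2 ≤ q τ := by
    intro T1 _ τ hτ
    obtain ⟨h1, h2, h3, h4, h5⟩ := hP τ hτ.1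
    exact ⟨by linarith, by linarith, by linarith⟩
  have hMq : ∀ t ∈ Set.Ici (0:ℝ), q t ≤ max (q 0) (qmin + rhomax/mumax) := by
    refine consortium_le_of_barrier hq_cont
      (fun T hT => (hInt T hT (hQall T hT)).2.2.2.1)
      (fun t ht => (hsys t ht).2.2.2.1) (le_max_left _ _) ?_
    intro τ hτ hMτ
    show (rhomax * v τ / (kv + v τ)) - mumax * (1 - qmin / q τ) * q τ ≤ 0
    obtain ⟨hs1, he1, hv1, hq1, hc1⟩ := hP τ hτ
    have hden : (0:ℝ) < kv + v τ := by linarith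
    have h1 : rhomax * v τ / (kv + v τ) ≤ rhomax := by
      rw [div_le_iff₀ hden]; nlinarith
    have hqτ : qmin + rhomax/mumax ≤ q τ := le_trans (le_max_right _ _) hMτ
    have hqp : (0:ℝ) < q τ := by linarith
    have hid : mumax * (1 - qmin / q τ) * q τ = mumax * (q τ - qmin) := by
      field_simp
    have h2 : rhomax ≤ mumax * (q τ - qmin) := by
      have h3 : rhomax / mumax ≤ q τ - qmin := by linarith
      have h4 : mumax * (rhomax / mumax) = rhomax := by field_simp
      nlinarith
    rw [hid]; linarith
  have hG2i : ∀ t : ℝ, 0 ≤ t →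
      IntervalIntegrable (fun τ =>
        beta * gamma * (-(1/gamma) * (phimax * s τ / (ks + s τ)) * e τ + d τ * (sIn - s τ))
          + beta * ((1 - alpha τ) * (phimax * s τ / (ks + s τ)) * e τ - d τ * e τ)
          + (alpha τ * beta * (phimax * s τ / (ks + s τ)) * e τ
              - (rhomax * v τ / (kv + v τ)) * c τ - d τ * v τ)
          + (((rhomax * v τ / (kv + v τ)) - mumax * (1 - qmin / q τ) * q τ) * c τ
              + q τ * ((mumax * (1 - qmin / q τ) - d τ) * c τ))) volume 0 t := by
    intro t ht
    obtain ⟨iGS, iGE, iGV, iGQ, iGC⟩ := hInt t ht (hQall t ht)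
    have iGQc : IntervalIntegrable (fun τ =>
        ((rhomax * v τ / (kv + v τ)) - mumax * (1 - qmin / q τ) * q τ) * c τ) volume 0 t := by
      have h := consortium_II_mul_cont ht hcC iGQ
      have e1 : (fun τ => c τ * ((rhomax * v τ / (kv + v τ)) - mumax * (1 - qmin / q τ) * q τ))
          = fun τ => ((rhomax * v τ / (kv + v τ)) - mumax * (1 - qmin / q τ) * q τ) * c τ := by
        funext τ; ring
      rw [← e1]; exact h
    have iqGC : IntervalIntegrable (fun τ =>
        q τ * ((mumax * (1 - qmin / q τ) - d τ) * c τ)) volume 0 t :=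
      consortium_II_mul_cont ht hqC iGC
    exact (((iGS.const_mul (beta*gamma)).add (iGE.const_mul beta)).add iGV).add
      (iGQc.add iqGC)
  have heqw2 : ∀ t ∈ Set.Ici (0:ℝ),
      beta*gamma*s t + beta*e t + v t + q t * c t
        = (beta*gamma*s 0 + beta*e 0 + v 0 + q 0 * c 0) + ∫ τ in (0:ℝ)..t,
          (beta * gamma * (-(1/gamma) * (phimax * s τ / (ks + s τ)) * e τ + d τ * (sIn - s τ))
          + beta * ((1 - alpha τ) * (phimax * s τ / (ks + s τ)) * e τ - d τ * e τ)
          + (alpha τ * beta * (phimax * s τ / (ks + s τ)) * e τ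
              - (rhomax * v τ / (kv + v τ)) * c τ - d τ * v τ)
          + (((rhomax * v τ / (kv + v τ)) - mumax * (1 - qmin / q τ) * q τ) * c τ
              + q τ * ((mumax * (1 - qmin / q τ) - d τ) * c τ))) := by
    intro t ht
    obtain ⟨iGS, iGE, iGV, iGQ, iGC⟩ := hInt t ht (hQall t ht)
    have iGQc : IntervalIntegrable (fun τ =>
        ((rhomax * v τ / (kv + v τ)) - mumax * (1 - qmin / q τ) * q τ) * c τ) volume 0 t := by
      have h := consortium_II_mul_cont ht hcC iGQ
      have e1 : (fun τ => c τ * ((rhomax * v τ / (kv + v τ)) - mumax * (1 - qmin / q τ) * q τ))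
          = fun τ => ((rhomax * v τ / (kv + v τ)) - mumax * (1 - qmin / q τ) * q τ) * c τ := by
        funext τ; ring
      rw [← e1]; exact h
    have iqGC : IntervalIntegrable (fun τ =>
        q τ * ((mumax * (1 - qmin / q τ) - d τ) * c τ)) volume 0 t :=
      consortium_II_mul_cont ht hqC iGC
    have hprod := consortium_prod_rule ht hqC hcC iGQ iGC
      (fun τ hτ => (hsys τ hτ.1).2.2.2.1) (fun τ hτ => (hsys τ hτ.1).2.2.2.2) t ⟨ht, le_rfl⟩
    have hprod' : q t * c t = q 0 * c 0 + ∫ τ in (0:ℝ)..t,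
        (((rhomax * v τ / (kv + v τ)) - mumax * (1 - qmin / q τ) * q τ) * c τ
          + q τ * ((mumax * (1 - qmin / q τ) - d τ) * c τ)) := hprod
    have hsplit : (∫ τ in (0:ℝ)..t,
        (beta * gamma * (-(1/gamma) * (phimax * s τ / (ks + s τ)) * e τ + d τ * (sIn - s τ))
          + beta * ((1 - alpha τ) * (phimax * s τ / (ks + s τ)) * e τ - d τ * e τ)
          + (alpha τ * beta * (phimax * s τ / (ks + s τ)) * e τ
              - (rhomax * v τ / (kv + v τ)) * c τ - d τ * v τ)
          + (((rhomax * v τ / (kv + v τ)) - mumax * (1 - qmin / q τ) * q τ) * c τ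
              + q τ * ((mumax * (1 - qmin / q τ) - d τ) * c τ))))
        = beta*gamma*(∫ τ in (0:ℝ)..t,
            (-(1/gamma) * (phimax * s τ / (ks + s τ)) * e τ + d τ * (sIn - s τ)))
          + beta*(∫ τ in (0:ℝ)..t,
            ((1 - alpha τ) * (phimax * s τ / (ks + s τ)) * e τ - d τ * e τ))
          + (∫ τ in (0:ℝ)..t,
            (alpha τ * beta * (phimax * s τ / (ks + s τ)) * e τ
              - (rhomax * v τ / (kv + v τ)) * c τ - d τ * v τ))
          + (∫ τ in (0:ℝ)..t,
            (((rhomax * v τ / (kv + v τ)) - mumax * (1 - qmin / q τ) * q τ) * c τ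
              + q τ * ((mumax * (1 - qmin / q τ) - d τ) * c τ))) := by
      rw [intervalIntegral.integral_add
          (((iGS.const_mul (beta*gamma)).add (iGE.const_mul beta)).add iGV)
          (iGQc.add iqGC),
        intervalIntegral.integral_add
          ((iGS.const_mul (beta*gamma)).add (iGE.const_mul beta)) iGV,
        intervalIntegral.integral_add (iGS.const_mul (beta*gamma)) (iGE.const_mul beta),
        intervalIntegral.integral_const_mul, intervalIntegral.integral_const_mul]
    have h1 := (hsys t ht).1
    have h2 := (hsys t ht).2.1
    have h3 := (hsys t ht).2.2.1
    rw [hsplit]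
    linear_combination beta*gamma*h1 + beta*h2 + h3 + hprod'
  have hw2cont : ContinuousOn
      (fun t => beta*gamma*s t + beta*e t + v t + q t * c t) (Set.Ici 0) :=
    (((continuousOn_const.mul hs_cont).add (continuousOn_const.mul he_cont)).add
      hv_cont).add (hq_cont.mul hc_cont)
  have hw2 : ∀ t ∈ Set.Ici (0:ℝ),
      beta*gamma*s t + beta*e t + v t + q t * c t
        ≤ max (beta*gamma*s 0 + beta*e 0 + v 0 + q 0 * c 0) (beta*gamma*sIn) := by
    refine consortium_le_of_barrier
      (x := fun t => beta*gamma*s t + beta*e t + v t + q t * c t)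
      hw2cont (fun T hT => hG2i T hT) heqw2 (le_max_left _ _) ?_
    intro τ hτ hM
    show beta * gamma * (-(1/gamma) * (phimax * s τ / (ks + s τ)) * e τ + d τ * (sIn - s τ))
          + beta * ((1 - alpha τ) * (phimax * s τ / (ks + s τ)) * e τ - d τ * e τ)
          + (alpha τ * beta * (phimax * s τ / (ks + s τ)) * e τ
              - (rhomax * v τ / (kv + v τ)) * c τ - d τ * v τ)
          + (((rhomax * v τ / (kv + v τ)) - mumax * (1 - qmin / q τ) * q τ) * c τ
              + q τ * ((mumax * (1 - qmin / q τ) - d τ) * c τ)) ≤ 0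
    obtain ⟨p1, p2, p3, p4, p5⟩ := hP τ hτ
    have hdτ := hd τ hτ
    have hn1 : ks + s τ ≠ 0 := ne_of_gt (by linarith)
    have hn2 : kv + v τ ≠ 0 := ne_of_gt (by linarith)
    have hn3 : q τ ≠ 0 := ne_of_gt (by linarith)
    have hγ : gamma ≠ 0 := ne_of_gt hgamma
    have hid : (beta * gamma * (-(1/gamma) * (phimax * s τ / (ks + s τ)) * e τ + d τ * (sIn - s τ))
          + beta * ((1 - alpha τ) * (phimax * s τ / (ks + s τ)) * e τ - d τ * e τ)
          + (alpha τ * beta * (phimax * s τ / (ks + s τ)) * e τ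
              - (rhomax * v τ / (kv + v τ)) * c τ - d τ * v τ)
          + (((rhomax * v τ / (kv + v τ)) - mumax * (1 - qmin / q τ) * q τ) * c τ
              + q τ * ((mumax * (1 - qmin / q τ) - d τ) * c τ)))
        = d τ * (beta*gamma*sIn
            - (beta*gamma*s τ + beta*e τ + v τ + q τ * c τ)) := by
      field_simp
      ring
    have hM' : beta*gamma*sIn ≤ beta*gamma*s τ + beta*e τ + v τ + q τ * c τ :=
      le_trans (le_max_right _ _) hM
    rw [hid]
    nlinarith [mul_nonneg hdτ.1
      (by linarith : 0 ≤ (beta*gamma*s τ + beta*e τ + v τ + q τ * c τ) - beta*gamma*sIn)]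
  refine ⟨hP, ?_⟩
  refine ⟨(max (beta*gamma*s 0 + beta*e 0 + v 0 + q 0 * c 0) (beta*gamma*sIn))/(beta*gamma)
    + (max (beta*gamma*s 0 + beta*e 0 + v 0 + q 0 * c 0) (beta*gamma*sIn))/beta
    + (max (beta*gamma*s 0 + beta*e 0 + v 0 + q 0 * c 0) (beta*gamma*sIn))
    + max (q 0) (qmin + rhomax/mumax)
    + (max (beta*gamma*s 0 + beta*e 0 + v 0 + q 0 * c 0) (beta*gamma*sIn))/qmin, ?_⟩
  intro t ht
  obtain ⟨p1, p2, p3, p4, p5⟩ := hP t ht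
  have hw := hw2 t ht
  have hqb := hMq t ht
  have hM2nn : (0:ℝ) ≤ max (beta*gamma*s 0 + beta*e 0 + v 0 + q 0 * c 0) (beta*gamma*sIn) :=
    le_trans (by positivity) (le_max_right _ _)
  have hMqnn : (0:ℝ) ≤ max (q 0) (qmin + rhomax/mumax) :=
    le_trans (by linarith : (0:ℝ) ≤ q 0) (le_max_left _ _)
  set M2 := max (beta*gamma*s 0 + beta*e 0 + v 0 + q 0 * c 0) (beta*gamma*sIn) with hM2def
  have a1 : (0:ℝ) ≤ M2/(beta*gamma) := by positivity
  have a2 : (0:ℝ) ≤ M2/beta := by positivity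
  have a5 : (0:ℝ) ≤ M2/qmin := by positivity
  have hbg : (0:ℝ) < beta*gamma := by positivity
  have hqcnn : 0 ≤ q t * c t := mul_nonneg (by linarith) p5
  have hbgs : 0 ≤ beta*gamma*s t := mul_nonneg hbg.le p1
  have hbe : 0 ≤ beta*e t := mul_nonneg hbeta.le p2
  have hsle : s t ≤ M2/(beta*gamma) := by
    rw [le_div_iff₀ hbg]; nlinarith
  have hele : e t ≤ M2/beta := by
    rw [le_div_iff₀ hbeta]; nlinarith
  have hvle : v t ≤ M2 := by nlinarith
  have hqcle : q t * c t ≤ M2 := by nlinarith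
  have hcle : c t ≤ M2/qmin := by
    rw [le_div_iff₀ hqmin]
    nlinarith [mul_nonneg p5 (by linarith : 0 ≤ q t - qmin)]
  refine ⟨abs_le.2 ⟨by linarith, by linarith⟩, abs_le.2 ⟨by linarith, by linarith⟩,
    abs_le.2 ⟨by linarith, by linarith⟩, abs_le.2 ⟨by linarith, by linarith⟩,
    abs_le.2 ⟨by linarith, by linarith⟩⟩
end
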